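/- arXiv:2509.06486 — 7 statements merged into one kernel-verified Lean document; each statement's English description precedes it below -/
import Mathlib

section
/- Let B ∈ M_n(ℝ) be a sign skew-symmetric matrix (sign(b_ij) = -sign(b_ji) for all i,j). Then B is skew-symmetrizable if and only if for every r ≥ 1 and every cyclic sequence of indices k_0, k_1, ..., k_r with k_0 = k_r, one has |∏_{j=1}^r b_{k_{j-1} k_j}| = |∏_{j=1}^r b_{k_j k_{j-1}}|. -/
open Matrix

noncomputable section

/-- Entrywise positive part `[A]₊`. -/
def matPos {n : ℕ} (A : Matrix (Fin n) (Fin n) ℝ) : Matrix (Fin n) (Fin n) ℝ :=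
  fun i j => max (A i j) 0

/-- `J_k`: the identity matrix with the `(k,k)` entry replaced by `-1`. -/
def Jmat {n : ℕ} (k : Fin n) : Matrix (Fin n) (Fin n) ℝ :=
  Matrix.diagonal (fun i => if i = k then -1 else 1)

/-- `A^{k•} = E_kk A`: keep only the `k`-th row of `A`. -/
def rowOnly {n : ℕ} (k : Fin n) (A : Matrix (Fin n) (Fin n) ℝ) : Matrix (Fin n) (Fin n) ℝ :=
  fun i j => if i = k then A i j else 0

/-- `A^{•k} = A E_kk`: keep only the `k`-th column of `A`. -/
def colOnly {n : ℕ} (k : Fin n) (A : Matrix (Fin n) (Fin n) ℝ) : Matrix (Fin n) (Fin n) ℝ :=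
  fun i j => if j = k then A i j else 0

/-- Matrix mutation `μ_k(B) = (J_k + [-B]₊^{•k}) B (J_k + [B]₊^{k•})`. -/
def mutB {n : ℕ} (B : Matrix (Fin n) (Fin n) ℝ) (k : Fin n) : Matrix (Fin n) (Fin n) ℝ :=
  (Jmat k + colOnly k (matPos (-B))) * B * (Jmat k + rowOnly k (matPos B))

/-- `B` is skew-symmetrizable: there is a positive diagonal `D` with `DB` skew-symmetric. -/
def SkewSymmetrizable {n : ℕ} (B : Matrix (Fin n) (Fin n) ℝ) : Prop :=
  ∃ d : Fin n → ℝ, (∀ i, 0 < d i) ∧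
    (Matrix.diagonal d * B)ᵀ = -(Matrix.diagonal d * B)

/-- One mutation step of the triple `(B_t, C_t, G_t)` in direction `k`,
with initial exchange matrix `B0`. -/
def stepBCG {n : ℕ} (B0 : Matrix (Fin n) (Fin n) ℝ)
    (X : Matrix (Fin n) (Fin n) ℝ × Matrix (Fin n) (Fin n) ℝ × Matrix (Fin n) (Fin n) ℝ)
    (k : Fin n) :
    Matrix (Fin n) (Fin n) ℝ × Matrix (Fin n) (Fin n) ℝ × Matrix (Fin n) (Fin n) ℝ :=
  ⟨mutB X.1 k,
   X.2.1 * Jmat k + X.2.1 * rowOnly k (matPos X.1) + colOnly k (matPos (-X.2.1)) * X.1,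
   X.2.2 * Jmat k + X.2.2 * colOnly k (matPos (-X.1)) - B0 * colOnly k (matPos (-X.2.1))⟩

/-- The triple `(B_t, C_t, G_t)` at the vertex of the `n`-regular tree reached from the
initial vertex by the path `w` (a list of mutation directions). -/
def BCG {n : ℕ} (B0 : Matrix (Fin n) (Fin n) ℝ) (w : List (Fin n)) :
    Matrix (Fin n) (Fin n) ℝ × Matrix (Fin n) (Fin n) ℝ × Matrix (Fin n) (Fin n) ℝ :=
  w.foldl (stepBCG B0) (B0, 1, 1)

/-- The `B`-pattern. -/
def Bpat {n : ℕ} (B0 : Matrix (Fin n) (Fin n) ℝ) (w : List (Fin n)) :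
    Matrix (Fin n) (Fin n) ℝ := (BCG B0 w).1

/-- The `C`-pattern. -/
def Cpat {n : ℕ} (B0 : Matrix (Fin n) (Fin n) ℝ) (w : List (Fin n)) :
    Matrix (Fin n) (Fin n) ℝ := (BCG B0 w).2.1

/-- The `G`-pattern. -/
def Gpat {n : ℕ} (B0 : Matrix (Fin n) (Fin n) ℝ) (w : List (Fin n)) :
    Matrix (Fin n) (Fin n) ℝ := (BCG B0 w).2.2

/-- Column sign-coherence of a matrix. -/
def ColSignCoherent {n : ℕ} (C : Matrix (Fin n) (Fin n) ℝ) : Prop :=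
  ∀ j, (∀ i, 0 ≤ C i j) ∨ (∀ i, C i j ≤ 0)

/-- Row sign-coherence of a matrix. -/
def RowSignCoherent {n : ℕ} (G : Matrix (Fin n) (Fin n) ℝ) : Prop :=
  ∀ i, (∀ j, 0 ≤ G i j) ∨ (∀ j, G i j ≤ 0)

/-!
Both conditions say that `log |b_ij| - log |b_ji|` is exact on the graph whose edges are the
pairs with `b_ij ≠ 0 ≠ b_ji`. Skew-symmetrizability by `D = diag(d)` means exactly
`d_i |b_ij| = d_j |b_ji|` (sign skew-symmetry takes care of the signs), i.e. `log d` is a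
potential for that cochain; the cycle condition says its circulation around every closed walk
vanishes. A cochain with vanishing circulation is exact: sum it along a walk from a chosen base
point of each connected component.
-/

open Finset SimpleGraph

theorem Finset.prod_range_succ_comp_of_eq {M : Type*} [CommMonoid M] (f : ℕ → M) {r : ℕ}
    (h : f 0 = f r) : ∏ j ∈ range r, f (j + 1) = ∏ j ∈ range r, f j := by
  cases r with
  | zero => simp
  | succ r => rw [prod_range_succ, prod_range_succ' f, h]

theorem Real.sign_mul_abs (x : ℝ) : Real.sign x * |x| = x := by
  rcases lt_trichotomy x 0 with hx | rfl | hx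
  · rw [Real.sign_of_neg hx, abs_of_neg hx]; ring
  · simp
  · rw [Real.sign_of_pos hx, abs_of_pos hx, one_mul]

namespace SimpleGraph.Walk

variable {V α : Type*} [AddCommGroup α] {G : SimpleGraph V}

def sumAlong (q : V → V → α) {u v : V} (p : G.Walk u v) : α :=
  (p.darts.map fun d => q d.fst d.snd).sum

variable (q : V → V → α)

@[simp] theorem sumAlong_nil {u : V} : (nil : G.Walk u u).sumAlong q = 0 := rfl

@[simp] theorem sumAlong_cons {u v w : V} (h : G.Adj u v) (p : G.Walk v w) :
    (cons h p).sumAlong q = q u v + p.sumAlong q := rfl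

@[simp] theorem sumAlong_append {u v w : V} (p : G.Walk u v) (p' : G.Walk v w) :
    (p.append p').sumAlong q = p.sumAlong q + p'.sumAlong q := by
  simp [sumAlong, darts_append]

@[simp] theorem sumAlong_concat {u v w : V} (p : G.Walk u v) (h : G.Adj v w) :
    (p.concat h).sumAlong q = p.sumAlong q + q v w := by
  simp [concat_eq_append]

@[simp] theorem sumAlong_copy {u v u' v' : V} (p : G.Walk u v) (hu : u = u') (hv : v = v') :
    (p.copy hu hv).sumAlong q = p.sumAlong q := by
  simp [sumAlong, darts_copy]

theorem sumAlong_eq_sum_range {u v : V} (p : G.Walk u v) :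
    p.sumAlong q = ∑ m ∈ range p.length, q (p.getVert m) (p.getVert (m + 1)) := by
  induction p with
  | nil => simp
  | cons h p ih =>
    rw [sumAlong_cons, ih, length_cons, sum_range_succ', add_comm]
    simp

-- Closing `p` and `p'` with the same return walk `p'.reverse` gives two closed walks.
theorem sumAlong_eq_of_forall_closed {u v : V} (hq : ∀ w (c : G.Walk w w), c.sumAlong q = 0)
    (p p' : G.Walk u v) : p.sumAlong q = p'.sumAlong q := by
  have h := hq u (p.append p'.reverse)
  have h' := hq u (p'.append p'.reverse)
  rw [sumAlong_append] at h h'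
  exact add_right_cancel (h.trans h'.symm)

end SimpleGraph.Walk

/-- A discrete Poincaré lemma: a 1-cochain with vanishing circulation is exact. -/
theorem SimpleGraph.exists_potential_of_sumAlong_closed_eq_zero {V α : Type*} [AddCommGroup α]
    (G : SimpleGraph V) (q : V → V → α) (hq : ∀ w (c : G.Walk w w), c.sumAlong q = 0) :
    ∃ φ : V → α, ∀ u v, G.Adj u v → φ v = φ u + q u v := by
  have reach (u : V) : G.Reachable (G.connectedComponentMk u).out u :=
    ConnectedComponent.eq.mp (G.connectedComponentMk u).out_eq
  refine ⟨fun u => (reach u).some.sumAlong q, fun u v h => ?_⟩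
  have hbase : (G.connectedComponentMk u).out = (G.connectedComponentMk v).out := by
    rw [ConnectedComponent.sound h.reachable]
  dsimp only
  rw [Walk.sumAlong_eq_of_forall_closed q hq (reach v).some
    (((reach u).some.concat h).copy hbase rfl)]
  simp

section CycleBalance

open Real

variable {ι : Type*}

def CycleBalanced (B : Matrix ι ι ℝ) : Prop :=
  ∀ (r : ℕ), 1 ≤ r → ∀ k : ℕ → ι, k 0 = k r →
    |∏ j ∈ range r, B (k j) (k (j + 1))| = |∏ j ∈ range r, B (k (j + 1)) (k j)|

theorem cycleBalanced_of_mul_abs_symm {B : Matrix ι ι ℝ} {d : ι → ℝ} (hd : ∀ i, 0 < d i)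
    (hbal : ∀ i j, d i * |B i j| = d j * |B j i|) : CycleBalanced B := by
  intro r _ k hk
  have hprod := prod_congr rfl fun j (_ : j ∈ range r) => hbal (k j) (k (j + 1))
  rw [prod_mul_distrib, prod_mul_distrib,
    prod_range_succ_comp_of_eq (fun j => d (k j)) (congrArg d hk)] at hprod
  rw [abs_prod, abs_prod]
  exact mul_left_cancel₀ (prod_pos fun j _ => hd (k j)).ne' hprod

def supportGraph (B : Matrix ι ι ℝ) : SimpleGraph ι where
  Adj i j := i ≠ j ∧ B i j ≠ 0 ∧ B j i ≠ 0
  symm := ⟨fun _ _ h => ⟨h.1.symm, h.2.2, h.2.1⟩⟩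
  loopless := ⟨fun _ h => h.1 rfl⟩

@[simp] theorem supportGraph_adj {B : Matrix ι ι ℝ} {i j : ι} :
    (supportGraph B).Adj i j ↔ i ≠ j ∧ B i j ≠ 0 ∧ B j i ≠ 0 :=
  Iff.rfl

def logRatio (B : Matrix ι ι ℝ) (i j : ι) : ℝ := log |B i j| - log |B j i|

theorem sumAlong_logRatio_eq_zero {B : Matrix ι ι ℝ} (hB : CycleBalanced B) {i : ι}
    (c : (supportGraph B).Walk i i) : c.sumAlong (logRatio B) = 0 := by
  rw [Walk.sumAlong_eq_sum_range]
  rcases Nat.eq_zero_or_pos c.length with h0 | hpos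
  · simp [h0]
  have hadj m (hm : m ∈ range c.length) := c.adj_getVert_succ (mem_range.mp hm)
  have hcyc := hB c.length hpos c.getVert (by simp)
  rw [abs_prod, abs_prod] at hcyc
  simp only [logRatio, sum_sub_distrib]
  rw [sub_eq_zero,
    ← log_prod fun m hm => abs_ne_zero.2 (supportGraph_adj.1 (hadj m hm)).2.1,
    ← log_prod fun m hm => abs_ne_zero.2 (supportGraph_adj.1 (hadj m hm)).2.2, hcyc]

theorem exists_mul_abs_symm_of_cycleBalanced {B : Matrix ι ι ℝ}
    (hzero : ∀ i j, B i j = 0 → B j i = 0) (hB : CycleBalanced B) :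
    ∃ d : ι → ℝ, (∀ i, 0 < d i) ∧ ∀ i j, d i * |B i j| = d j * |B j i| := by
  obtain ⟨φ, hφ⟩ := (supportGraph B).exists_potential_of_sumAlong_closed_eq_zero (logRatio B)
    fun _ c => sumAlong_logRatio_eq_zero hB c
  refine ⟨fun i => exp (φ i), fun i => exp_pos _, fun i j => ?_⟩
  by_cases hij : i = j
  · rw [hij]
  dsimp only
  by_cases hBij : B i j = 0
  · simp [hBij, hzero i j hBij]
  have hBji : B j i ≠ 0 := fun h => hBij (hzero j i h)
  rw [hφ i j (supportGraph_adj.2 ⟨hij, hBij, hBji⟩), logRatio, exp_add, exp_sub,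
    exp_log (abs_pos.2 hBij), exp_log (abs_pos.2 hBji)]
  field_simp

end CycleBalance

theorem skewSymmetrizable_iff_exists_mul_abs_symm {n : ℕ} {B : Matrix (Fin n) (Fin n) ℝ}
    (hsign : ∀ i j, Real.sign (B i j) = -Real.sign (B j i)) :
    SkewSymmetrizable B ↔
      ∃ d : Fin n → ℝ, (∀ i, 0 < d i) ∧ ∀ i j, d i * |B i j| = d j * |B j i| := by
  have entrywise (d : Fin n → ℝ) : (diagonal d * B)ᵀ = -(diagonal d * B) ↔
      ∀ i j, d j * B j i = -(d i * B i j) := by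
    simp [← Matrix.ext_iff, diagonal_mul, mul_comm (B _ _)]
  simp only [SkewSymmetrizable, entrywise]
  refine exists_congr fun d => and_congr_right fun hd => ⟨fun h i j => ?_, fun h i j => ?_⟩
  · have := congrArg abs (h j i)
    rwa [abs_mul, abs_neg, abs_mul, abs_of_pos (hd i), abs_of_pos (hd j)] at this
  · linear_combination (-d j) * Real.sign_mul_abs (B j i) + (-d i) * Real.sign_mul_abs (B i j)
      + (d j * |B j i|) * hsign j i + Real.sign (B i j) * h i j

/-- a sign skew-symmetric real matrix is skew-symmetrizable iff, for every
cyclic sequence of indices `k_0, …, k_r` with `k_0 = k_r` (`r ≥ 1`), the absolute values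
of the two cyclic products of entries agree. -/
theorem stmt5 {n : ℕ} (B : Matrix (Fin n) (Fin n) ℝ)
    (hsign : ∀ i j, Real.sign (B i j) = -Real.sign (B j i)) :
    SkewSymmetrizable B ↔
      ∀ (r : ℕ), 1 ≤ r → ∀ k : ℕ → Fin n, k 0 = k r →
        |∏ j ∈ Finset.range r, B (k j) (k (j + 1))| =
        |∏ j ∈ Finset.range r, B (k (j + 1)) (k j)| := by
  rw [skewSymmetrizable_iff_exists_mul_abs_symm hsign]
  constructor
  · rintro ⟨d, hd, hbal⟩
    exact cycleBalanced_of_mul_abs_symm hd hbal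
  · refine exists_mul_abs_symm_of_cycleBalanced fun i j h => ?_
    rw [← Real.sign_eq_zero_iff, hsign j i, h, Real.sign_zero, neg_zero]

end
end

section
/- If an ℝ-valued quiver Q (equivalently a real skew-symmetric matrix Q = (q_ij)) is of quasi-integer type, then every weight satisfies q_ij² ∈ ℤ, and for every chordless cycle (k_0, k_1, ..., k_r) with k_0 = k_r in the underlying graph of Q, the product ∏_{j=1}^r q_{k_{j-1} k_j} is an integer. -/
open Matrix

noncomputable section

/-- A real matrix `B` is of quasi-integer type if `H B H⁻¹` has integer entries for some
positive diagonal matrix `H`. -/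
def QuasiInteger {n : ℕ} (B : Matrix (Fin n) (Fin n) ℝ) : Prop :=
  ∃ h : Fin n → ℝ, (∀ i, 0 < h i) ∧
    ∀ i j, ∃ m : ℤ,
      (Matrix.diagonal h * B * Matrix.diagonal (fun i => (h i)⁻¹)) i j = (m : ℝ)

/-!
Conjugating by a diagonal matrix `H` rescales the entry `b_ij` to `h_i b_ij h_j⁻¹`. Along a
closed walk the scalars `h` cancel, so both `b_ij b_ji` and the product of the weights around a
cycle are the same for `B` and for the integer matrix `H B H⁻¹`. For skew-symmetric `B`,
`b_ij² = -b_ij b_ji`.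
-/

theorem Finset.prod_range_succ_eq_prod_range_of_eq {M : Type*} [CommMonoid M] (f : ℕ → M)
    {r : ℕ} (hf : f 0 = f r) : ∏ j ∈ Finset.range r, f (j + 1) = ∏ j ∈ Finset.range r, f j := by
  cases r with
  | zero => simp
  | succ s => rw [Finset.prod_range_succ, Finset.prod_range_succ', hf]

namespace Matrix

variable {ι K : Type*} [Fintype ι] [DecidableEq ι] [Field K]

theorem diagonal_mul_mul_diagonal_inv_apply (h : ι → K) (B : Matrix ι ι K) (i j : ι) :
    (diagonal h * B * diagonal (fun i => (h i)⁻¹)) i j = h i * B i j * (h j)⁻¹ := by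
  rw [mul_diagonal, diagonal_mul]

theorem diagonal_conj_apply_mul_apply_symm {h : ι → K} (hh : ∀ i, h i ≠ 0)
    (B : Matrix ι ι K) (i j : ι) :
    (diagonal h * B * diagonal (fun i => (h i)⁻¹)) i j *
      (diagonal h * B * diagonal (fun i => (h i)⁻¹)) j i = B i j * B j i := by
  simp only [diagonal_mul_mul_diagonal_inv_apply]
  field_simp [hh i, hh j]

theorem prod_diagonal_conj_apply_of_closed_walk {h : ι → K} (hh : ∀ i, h i ≠ 0)
    (B : Matrix ι ι K) {r : ℕ} {k : ℕ → ι} (hk : k 0 = k r) :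
    ∏ j ∈ Finset.range r, (diagonal h * B * diagonal (fun i => (h i)⁻¹)) (k j) (k (j + 1)) =
      ∏ j ∈ Finset.range r, B (k j) (k (j + 1)) := by
  have hprod : ∏ j ∈ Finset.range r, h (k j) ≠ 0 :=
    Finset.prod_ne_zero_iff.mpr fun j _ => hh (k j)
  simp only [diagonal_mul_mul_diagonal_inv_apply, Finset.prod_mul_distrib, Finset.prod_inv_distrib,
    Finset.prod_range_succ_eq_prod_range_of_eq (fun j => h (k j)) (congrArg h hk)]
  field_simp

end Matrix

/-- if a real skew-symmetric matrix `Q` (an ℝ-valued quiver) is of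
quasi-integer type, then every weight squares to an integer, and the product of the
weights along every chordless cycle (a cycle of its underlying graph) is an integer. -/
theorem stmt7 {n : ℕ} (Q : Matrix (Fin n) (Fin n) ℝ)
    (hQ : Qᵀ = -Q) (hqi : QuasiInteger Q) :
    (∀ i j, ∃ m : ℤ, Q i j ^ 2 = (m : ℝ)) ∧
    (∀ (r : ℕ), 1 ≤ r → ∀ k : ℕ → Fin n, k 0 = k r →
      (∀ j < r, Q (k j) (k (j + 1)) ≠ 0) →
      (∀ a b, a < r → b < r → k a = k b → a = b) →
      ∃ m : ℤ, ∏ j ∈ Finset.range r, Q (k j) (k (j + 1)) = (m : ℝ)) := by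
  obtain ⟨h, hpos, hint⟩ := hqi
  have hh : ∀ i, h i ≠ 0 := fun i => (hpos i).ne'
  choose M hM using hint
  constructor
  · intro i j
    have hskew : Q j i = -Q i j := by simpa using congrFun (congrFun hQ i) j
    refine ⟨-(M i j * M j i), ?_⟩
    push_cast
    rw [← hM, ← hM, diagonal_conj_apply_mul_apply_symm hh, hskew]
    ring
  · intro r _ k hk _ _
    refine ⟨∏ j ∈ Finset.range r, M (k j) (k (j + 1)), ?_⟩
    push_cast
    simp only [← hM, prod_diagonal_conj_apply_of_closed_walk hh Q hk]
end
end

section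
/- First duality: for the matrix patterns of a real skew-symmetrizable matrix B, one has G_t B_t = B_{t_0} C_t for every vertex t of the n-regular tree. -/
open Matrix

noncomputable section

section Aux

variable {n : ℕ} (k : Fin n) (A A' X B : Matrix (Fin n) (Fin n) ℝ)

lemma Jmat_mul_Jmat : Jmat k * Jmat k = (1 : Matrix (Fin n) (Fin n) ℝ) := by
  simp only [Jmat, diagonal_mul_diagonal]
  ext i j
  by_cases h : i = k <;> simp [Matrix.diagonal, h, Matrix.one_apply]

lemma Jmat_mul_colOnly (hA : A k k = 0) : Jmat k * colOnly k A = colOnly k A := by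
  ext i j
  simp [Jmat, colOnly, Matrix.mul_apply, Matrix.diagonal]
  by_cases h : i = k <;> by_cases h2 : j = k <;> simp [h, h2, hA]

lemma colOnly_mul_Jmat : colOnly k A * Jmat k = -(colOnly k A) := by
  ext i j
  simp [Jmat, colOnly, Matrix.mul_apply, Matrix.diagonal]
  by_cases h2 : j = k <;> simp [h2]

lemma colOnly_mul_colOnly : colOnly k A * colOnly k A' = A' k k • colOnly k A := by
  ext i j
  simp [colOnly, Matrix.mul_apply]
  by_cases h2 : j = k <;> simp [h2, mul_comm]

lemma colOnly_mul_zeroRow (hX : ∀ j, X k j = 0) : colOnly k A * X = 0 := by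
  ext i j
  simp [colOnly, Matrix.mul_apply, hX]

lemma sumcol {n : ℕ} (f g : Fin n → ℝ) (c : Fin n) :
    ∑ x, f x * (if x = c then g x else 0) = f c * g c := by
  rw [Finset.sum_eq_single c] <;> simp +contextual

lemma sumcol' {n : ℕ} (f g : Fin n → ℝ) (c : Fin n) :
    ∑ x, (if x = c then g x else 0) * f x = g c * f c := by
  rw [Finset.sum_eq_single c] <;> simp +contextual

lemma sumcol'' {n : ℕ} (f g : Fin n → ℝ) (c : Fin n) :
    ∑ x, (if c = x then g x else 0) * f x = g c * f c := by
  rw [Finset.sum_eq_single c]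
  · simp
  · intro b _ h; simp [Ne.symm h]
  · simp

lemma mutB_apply (hkk : B k k = 0) (i j : Fin n) :
    mutB B k i j = (if i = k then (-1:ℝ) else 1) * (if j = k then (-1:ℝ) else 1) * B i j
      + (if j = k then (-1:ℝ) else 1) * max (-B i k) 0 * B k j
      + (if i = k then (-1:ℝ) else 1) * B i k * max (B k j) 0 := by
  simp only [mutB, Matrix.add_mul, Matrix.mul_add, Matrix.add_apply, Matrix.mul_apply, Jmat,
    colOnly, rowOnly, matPos, Matrix.diagonal, Matrix.neg_apply, Matrix.of_apply]
  simp only [sumcol', sumcol'', mul_add, Finset.sum_add_distrib, sumcol]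
  by_cases h : i = k <;> by_cases h2 : j = k <;> simp [h, h2, hkk]

lemma skew_step (d : Fin n → ℝ) (hd : ∀ i, 0 < d i)
    (hskew : ∀ i j, d i * B i j = -(d j * B j i)) :
    ∀ i j, d i * mutB B k i j = -(d j * mutB B k j i) := by
  have hkk : B k k = 0 := by have := hskew k k; nlinarith [hd k]
  intro i j
  rw [mutB_apply _ _ hkk, mutB_apply _ _ hkk]
  have h1 : d i * max (-B i k) 0 = d k * max (B k i) 0 := by
    rw [mul_max_of_nonneg _ _ (hd i).le, mul_max_of_nonneg _ _ (hd k).le]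
    congr 1
    · linear_combination -hskew i k
    · ring
  have h2 : d j * max (-B j k) 0 = d k * max (B k j) 0 := by
    rw [mul_max_of_nonneg _ _ (hd j).le, mul_max_of_nonneg _ _ (hd k).le]
    congr 1
    · linear_combination -hskew j k
    · ring
  by_cases h : i = k <;> by_cases h' : j = k <;> simp [h, h', hkk]
  · linarith [hskew j k, mul_eq_zero_of_right (d k) hkk]
  · linear_combination -hskew i k
  · linear_combination hskew i j + B k j * h1 + B k i * h2 +
      max (B k j) 0 * hskew i k + max (B k i) 0 * hskew j k

lemma PP_one (hkk : B k k = 0) :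
    (Jmat k + colOnly k (matPos (-B))) * (Jmat k + colOnly k (matPos (-B))) = 1 := by
  have hC1kk : matPos (-B) k k = 0 := by simp [matPos, hkk]
  rw [add_mul, mul_add, mul_add, Jmat_mul_Jmat, Jmat_mul_colOnly _ _ hC1kk,
    colOnly_mul_Jmat, colOnly_mul_colOnly, hC1kk]
  simp

lemma row_mut (hkk : B k k = 0) (j : Fin n) : mutB B k k j + B k j = 0 := by
  rw [mutB_apply _ _ hkk]
  by_cases h : j = k <;> simp [h, hkk]

lemma key_alg (B0 C G : Matrix (Fin n) (Fin n) ℝ) (hkk : B k k = 0)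
    (hGB : G * B = B0 * C) :
    (G * Jmat k + G * colOnly k (matPos (-B)) - B0 * colOnly k (matPos (-C))) * mutB B k
      = B0 * (C * Jmat k + C * rowOnly k (matPos B) + colOnly k (matPos (-C)) * B) := by
  have hMB' : colOnly k (matPos (-C)) * mutB B k = -(colOnly k (matPos (-C)) * B) := by
    have h0 : colOnly k (matPos (-C)) * (mutB B k + B) = 0 :=
      colOnly_mul_zeroRow k (matPos (-C)) _ (fun j => row_mut k B hkk j)
    rw [Matrix.mul_add] at h0
    exact eq_neg_of_add_eq_zero_left h0
  have hPmut : (Jmat k + colOnly k (matPos (-B))) * mutB B k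
      = B * (Jmat k + rowOnly k (matPos B)) := by
    rw [mutB, mul_assoc _ B _, ← mul_assoc _ _ (B * _), PP_one k B hkk, one_mul]
  have e1 : (G * Jmat k + G * colOnly k (matPos (-B)) - B0 * colOnly k (matPos (-C)))
        * mutB B k
      = G * ((Jmat k + colOnly k (matPos (-B))) * mutB B k)
        - B0 * (colOnly k (matPos (-C)) * mutB B k) := by
    noncomm_ring
  rw [e1, hPmut, hMB', ← mul_assoc, hGB]
  noncomm_ring

end Aux

/-- first duality: `G_t B_t = B_{t₀} C_t` for every vertex `t` of the
`n`-regular tree (reached from `t₀` by a path `w`). -/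
theorem stmt10 {n : ℕ} (B : Matrix (Fin n) (Fin n) ℝ)
    (hB : SkewSymmetrizable B) :
    ∀ w : List (Fin n), Gpat B w * Bpat B w = B * Cpat B w := by
  obtain ⟨d, hd, hsk⟩ := hB
  have hskew0 : ∀ i j, d i * B i j = -(d j * B j i) := by
    intro i j
    have h := congrFun (congrFun hsk j) i
    simp [Matrix.mul_apply, Matrix.diagonal, Matrix.transpose_apply] at h
    linarith
  suffices H : ∀ w, (∀ i j, d i * Bpat B w i j = -(d j * Bpat B w j i)) ∧
      Gpat B w * Bpat B w = B * Cpat B w from fun w => (H w).2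
  intro w
  induction w using List.reverseRecOn with
  | nil =>
    refine ⟨hskew0, ?_⟩
    simp [Gpat, Bpat, Cpat, BCG]
  | append_singleton w k ih =>
    obtain ⟨ihs, ihgb⟩ := ih
    have hfold : BCG B (w ++ [k]) = stepBCG B (BCG B w) k := by
      simp [BCG, List.foldl_append]
    have hkk : (BCG B w).1 k k = 0 := by
      have := ihs k k
      simp only [Bpat] at this
      nlinarith [hd k]
    constructor
    · intro i j
      simp only [Bpat, hfold, stepBCG]
      exact skew_step k _ d hd (fun i j => ihs i j) i j
    · simp only [Gpat, Bpat, Cpat, hfold, stepBCG]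
      exact key_alg k _ B _ _ hkk ihgb

end
end

section
/- Positive conjugation compatibility of patterns: let B ∈ M_n(ℝ) be skew-symmetrizable and H a positive diagonal matrix; set B̂ = H B H^{-1}. Then for every vertex t of the n-regular tree, the patterns satisfy B̂_t = H B_t H^{-1}, Ĉ_t = H C_t H^{-1}, and Ĝ_t = H G_t H^{-1}, where hatted matrices are the B-, C-, G-patterns with initial matrix B̂ and unhatted ones those with initial matrix B. -/
open Matrix

noncomputable section

/-!
Conjugation `A ↦ H A H⁻¹` by a positive diagonal matrix is a ring automorphism of the matrix
ring that fixes every diagonal matrix (in particular every `J_k`), preserves the row/column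
truncations, and, because it rescales each entry by a positive factor, commutes with the
entrywise positive part. Every ingredient of the mutation rules of `B`, `C` and `G` is built
from these operations, so one mutation step commutes with the conjugation, and induction along
the path gives the claim at every vertex.
-/

section Equivariance

variable {n : ℕ} (φ : Matrix (Fin n) (Fin n) ℝ →+* Matrix (Fin n) (Fin n) ℝ)
  (hpos : ∀ A, φ (matPos A) = matPos (φ A))
  (hcol : ∀ k A, φ (colOnly k A) = colOnly k (φ A))
  (hrow : ∀ k A, φ (rowOnly k A) = rowOnly k (φ A))
  (hJ : ∀ k, φ (Jmat k) = Jmat k)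
include hpos hcol hrow hJ

theorem mutB_map (B : Matrix (Fin n) (Fin n) ℝ) (k : Fin n) :
    mutB (φ B) k = φ (mutB B k) := by
  simp only [mutB, map_mul, map_add, hJ, hcol, hrow, hpos, map_neg]

theorem stepBCG_map (B0 : Matrix (Fin n) (Fin n) ℝ)
    (X : Matrix (Fin n) (Fin n) ℝ × Matrix (Fin n) (Fin n) ℝ × Matrix (Fin n) (Fin n) ℝ)
    (k : Fin n) :
    stepBCG (φ B0) (Prod.map φ (Prod.map φ φ) X) k =
      Prod.map φ (Prod.map φ φ) (stepBCG B0 X k) := by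
  simp only [stepBCG, Prod.map, mutB_map φ hpos hcol hrow hJ, map_add, map_sub, map_mul, map_neg,
    hJ, hcol, hrow, hpos]

theorem BCG_map (B0 : Matrix (Fin n) (Fin n) ℝ) (w : List (Fin n)) :
    BCG (φ B0) w = Prod.map φ (Prod.map φ φ) (BCG B0 w) := by
  have hinit : ((φ B0, 1, 1) : Matrix (Fin n) (Fin n) ℝ × _ × _) =
      Prod.map φ (Prod.map φ φ) (B0, 1, 1) := by
    simp only [Prod.map, map_one]
  rw [BCG, BCG, hinit]
  exact List.foldl_hom _ fun X k => stepBCG_map φ hpos hcol hrow hJ B0 X k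

end Equivariance

section DiagonalConjugation

variable {n : ℕ} (h : Fin n → ℝ) (hh : ∀ i, h i ≠ 0)

def diagonalUnit : (Matrix (Fin n) (Fin n) ℝ)ˣ where
  val := Matrix.diagonal h
  inv := Matrix.diagonal fun i => (h i)⁻¹
  val_inv := by simp [Matrix.diagonal_mul_diagonal, hh]
  inv_val := by simp [Matrix.diagonal_mul_diagonal, hh]

def diagonalConj : Matrix (Fin n) (Fin n) ℝ →+* Matrix (Fin n) (Fin n) ℝ :=
  MulSemiringAction.toRingHom _ _ (ConjAct.toConjAct (diagonalUnit h hh))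

theorem diagonalConj_apply (A : Matrix (Fin n) (Fin n) ℝ) :
    diagonalConj h hh A = Matrix.diagonal h * A * Matrix.diagonal fun i => (h i)⁻¹ :=
  ConjAct.units_smul_def _ A

theorem diagonalConj_apply_apply (A : Matrix (Fin n) (Fin n) ℝ) (i j : Fin n) :
    diagonalConj h hh A i j = h i * A i j * (h j)⁻¹ := by
  rw [diagonalConj_apply, Matrix.mul_diagonal, Matrix.diagonal_mul]

theorem diagonalConj_diagonal (d : Fin n → ℝ) :
    diagonalConj h hh (Matrix.diagonal d) = Matrix.diagonal d := by
  ext i j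
  rw [diagonalConj_apply_apply]
  rcases eq_or_ne i j with rfl | hij
  · rw [Matrix.diagonal_apply_eq, mul_right_comm, mul_inv_cancel₀ (hh i), one_mul]
  · simp [hij]

theorem diagonalConj_colOnly (k : Fin n) (A : Matrix (Fin n) (Fin n) ℝ) :
    diagonalConj h hh (colOnly k A) = colOnly k (diagonalConj h hh A) := by
  ext i j
  simp only [colOnly, diagonalConj_apply_apply]
  split_ifs <;> simp

theorem diagonalConj_rowOnly (k : Fin n) (A : Matrix (Fin n) (Fin n) ℝ) :
    diagonalConj h hh (rowOnly k A) = rowOnly k (diagonalConj h hh A) := by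
  ext i j
  simp only [rowOnly, diagonalConj_apply_apply]
  split_ifs <;> simp

theorem diagonalConj_matPos (hpos : ∀ i, 0 < h i) (A : Matrix (Fin n) (Fin n) ℝ) :
    diagonalConj h hh (matPos A) = matPos (diagonalConj h hh A) := by
  ext i j
  simp only [matPos, diagonalConj_apply_apply]
  rw [mul_max_of_nonneg _ _ (hpos i).le, max_mul_of_nonneg _ _ (inv_nonneg.2 (hpos j).le),
    mul_zero, zero_mul]

end DiagonalConjugation

theorem stmt11_general {n : ℕ} (B : Matrix (Fin n) (Fin n) ℝ)
    (h : Fin n → ℝ) (hh : ∀ i, 0 < h i) :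
    ∀ w : List (Fin n),
      Bpat (Matrix.diagonal h * B * Matrix.diagonal (fun i => (h i)⁻¹)) w =
        Matrix.diagonal h * Bpat B w * Matrix.diagonal (fun i => (h i)⁻¹) ∧
      Cpat (Matrix.diagonal h * B * Matrix.diagonal (fun i => (h i)⁻¹)) w =
        Matrix.diagonal h * Cpat B w * Matrix.diagonal (fun i => (h i)⁻¹) ∧
      Gpat (Matrix.diagonal h * B * Matrix.diagonal (fun i => (h i)⁻¹)) w =
        Matrix.diagonal h * Gpat B w * Matrix.diagonal (fun i => (h i)⁻¹) := by
  intro w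
  have hne : ∀ i, h i ≠ 0 := fun i => (hh i).ne'
  have hconj := BCG_map (diagonalConj h hne) (diagonalConj_matPos h hne hh)
    (diagonalConj_colOnly h hne) (diagonalConj_rowOnly h hne)
    (fun k => diagonalConj_diagonal h hne _) B w
  simpa only [Bpat, Cpat, Gpat, Prod.ext_iff, Prod.map_fst, Prod.map_snd, diagonalConj_apply]
    using hconj

/-- positive conjugation compatibility: if `B̂ = H B H⁻¹` for a positive
diagonal matrix `H = diag h`, then at every vertex `w`,
`B̂_w = H B_w H⁻¹`, `Ĉ_w = H C_w H⁻¹`, `Ĝ_w = H G_w H⁻¹`. -/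
theorem stmt11 {n : ℕ} (B : Matrix (Fin n) (Fin n) ℝ)
    (hB : SkewSymmetrizable B) (h : Fin n → ℝ) (hh : ∀ i, 0 < h i) :
    ∀ w : List (Fin n),
      Bpat (Matrix.diagonal h * B * Matrix.diagonal (fun i => (h i)⁻¹)) w =
        Matrix.diagonal h * Bpat B w * Matrix.diagonal (fun i => (h i)⁻¹) ∧
      Cpat (Matrix.diagonal h * B * Matrix.diagonal (fun i => (h i)⁻¹)) w =
        Matrix.diagonal h * Cpat B w * Matrix.diagonal (fun i => (h i)⁻¹) ∧
      Gpat (Matrix.diagonal h * B * Matrix.diagonal (fun i => (h i)⁻¹)) w =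
        Matrix.diagonal h * Gpat B w * Matrix.diagonal (fun i => (h i)⁻¹) :=
  stmt11_general B h hh

end
end

section
/- Second duality: let B ∈ M_n(ℝ) be skew-symmetrizable with skew-symmetrizer D, and suppose its C-pattern is sign-coherent up to d. Then for any vertex t with d(t_0,t) ≤ d+1, one has D^{-1} G_t^T D C_t = I. Equivalently, with the inner product ⟨a,b⟩_D = a^T D b, the g- and c-vectors satisfy ⟨g_{i;t}, c_{j;t}⟩_D = d_i if i = j and 0 otherwise. -/
open Matrix

noncomputable section

namespace Stmt14Aux
open Matrix

variable {n : ℕ}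

lemma matPos_apply (A : Matrix (Fin n) (Fin n) ℝ) (i j) : matPos A i j = max (A i j) 0 := rfl
lemma rowOnly_apply (k : Fin n) (A : Matrix (Fin n) (Fin n) ℝ) (i j) :
    rowOnly k A i j = if i = k then A i j else 0 := rfl
lemma colOnly_apply (k : Fin n) (A : Matrix (Fin n) (Fin n) ℝ) (i j) :
    colOnly k A i j = if j = k then A i j else 0 := rfl
lemma Jmat_apply (k : Fin n) (i j) :
    Jmat k i j = if i = j then (if i = k then (-1:ℝ) else 1) else 0 := by
  simp [Jmat, Matrix.diagonal_apply]

lemma mul_rowOnly (M X : Matrix (Fin n) (Fin n) ℝ) (k : Fin n) :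
    M * rowOnly k X = Matrix.of fun i j => M i k * X k j := by
  ext i j
  simp [Matrix.mul_apply, rowOnly, mul_ite]

lemma colOnly_mul (Y M : Matrix (Fin n) (Fin n) ℝ) (k : Fin n) :
    colOnly k Y * M = Matrix.of fun i j => Y i k * M k j := by
  ext i j
  simp [Matrix.mul_apply, colOnly, ite_mul]

lemma rowOnly_mul (X M : Matrix (Fin n) (Fin n) ℝ) (k : Fin n) :
    rowOnly k X * M = rowOnly k (X * M) := by
  ext i j
  simp [Matrix.mul_apply, rowOnly, ite_mul]

lemma mul_colOnly (M Y : Matrix (Fin n) (Fin n) ℝ) (k : Fin n) :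
    M * colOnly k Y = colOnly k (M * Y) := by
  ext i j
  simp [Matrix.mul_apply, colOnly, mul_ite]

lemma Jmat_mul (M : Matrix (Fin n) (Fin n) ℝ) (k : Fin n) :
    Jmat k * M = Matrix.of fun i j => if i = k then -M i j else M i j := by
  ext i j
  simp [Jmat, Matrix.diagonal_mul]

lemma mul_Jmat (M : Matrix (Fin n) (Fin n) ℝ) (k : Fin n) :
    M * Jmat k = Matrix.of fun i j => if j = k then -M i j else M i j := by
  ext i j
  simp [Jmat, Matrix.mul_diagonal]

lemma Jmat_transpose (k : Fin n) : (Jmat k)ᵀ = Jmat k := Matrix.diagonal_transpose _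

lemma Jmat_mul_Jmat (k : Fin n) : Jmat k * Jmat k = (1 : Matrix (Fin n) (Fin n) ℝ) := by
  ext i j
  rw [Jmat_mul]
  simp [Jmat_apply, Matrix.one_apply]
  split <;> split <;> simp_all

end Stmt14Aux
namespace Stmt14Aux
open Matrix
variable {n : ℕ}

/-- `(J_k + rowOnly k X)^2 = 1` when `X k k = 0`. -/
lemma sq_row (X : Matrix (Fin n) (Fin n) ℝ) (k : Fin n) (hX : X k k = 0) :
    (Jmat k + rowOnly k X) * (Jmat k + rowOnly k X) = 1 := by
  rw [add_mul, mul_add, mul_add, Jmat_mul_Jmat, Jmat_mul, rowOnly_mul, mul_Jmat, mul_rowOnly]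
  ext i j
  simp only [Matrix.add_apply, Matrix.of_apply, rowOnly, Matrix.one_apply]
  rcases eq_or_ne i k with hi | hi <;>
    rcases eq_or_ne j k with hj | hj <;> simp [hi, hj, hX]

/-- `(J_k + colOnly k Y)^2 = 1` when `Y k k = 0`. -/
lemma sq_col (Y : Matrix (Fin n) (Fin n) ℝ) (k : Fin n) (hY : Y k k = 0) :
    (Jmat k + colOnly k Y) * (Jmat k + colOnly k Y) = 1 := by
  rw [add_mul, mul_add, mul_add, Jmat_mul_Jmat, Jmat_mul, mul_Jmat, mul_colOnly, colOnly_mul]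
  ext i j
  simp only [Matrix.add_apply, Matrix.of_apply, colOnly, Matrix.one_apply]
  rcases eq_or_ne i k with hi | hi <;>
    rcases eq_or_ne j k with hj | hj <;> simp [hi, hj, hY]

end Stmt14Aux
namespace Stmt14Aux
open Matrix
variable {n : ℕ}

lemma mul_max0 (c x : ℝ) (hc : 0 ≤ c) : c * max x 0 = max (c * x) 0 := by
  rw [mul_max_of_nonneg _ _ hc, mul_zero]

/-- Entrywise form of the skew condition. -/
lemma skew_entry {dd : Fin n → ℝ} {B : Matrix (Fin n) (Fin n) ℝ}
    (h : (Matrix.diagonal dd * B)ᵀ = -(Matrix.diagonal dd * B)) (i j : Fin n) :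
    dd j * B j i = -(dd i * B i j) := by
  have := congrFun (congrFun h i) j
  simpa [Matrix.transpose_apply, Matrix.diagonal_mul] using this

lemma diag_zero {dd : Fin n → ℝ} {B : Matrix (Fin n) (Fin n) ℝ}
    (hdd : ∀ i, 0 < dd i)
    (h : (Matrix.diagonal dd * B)ᵀ = -(Matrix.diagonal dd * B)) (k : Fin n) :
    B k k = 0 := by
  have h1 := skew_entry h k k
  have h2 : dd k * B k k = 0 := by linarith
  exact (mul_eq_zero.mp h2).resolve_left (hdd k).ne'

/-- The key swap identity: `D (J_k + [-B]₊^{•k}) = (J_k + [B]₊^{k•})ᵀ D`. -/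
lemma keySwap {dd : Fin n → ℝ} {B : Matrix (Fin n) (Fin n) ℝ}
    (hdd : ∀ i, 0 < dd i)
    (h : (Matrix.diagonal dd * B)ᵀ = -(Matrix.diagonal dd * B)) (k : Fin n) :
    Matrix.diagonal dd * (Jmat k + colOnly k (matPos (-B)))
      = (Jmat k + rowOnly k (matPos B))ᵀ * Matrix.diagonal dd := by
  ext i j
  rw [Matrix.diagonal_mul, Matrix.mul_diagonal]
  simp only [Matrix.add_apply, Matrix.transpose_apply, colOnly, rowOnly, matPos,
    Matrix.neg_apply, Jmat_apply]
  rcases eq_or_ne j k with hj | hj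
  · subst hj
    rcases eq_or_ne i j with hi | hi
    · subst hi
      rw [diag_zero hdd h i]
      norm_num
    · simp only [hi, Ne.symm hi, if_false, if_true, zero_add, add_zero]
      rw [mul_max0 _ _ (hdd i).le, mul_comm _ (dd j), mul_max0 _ _ (hdd j).le,
        skew_entry h i j, mul_comm (dd i) (B i j)]
      ring_nf
  · rcases eq_or_ne i j with hi | hi
    · subst hi; simp [hj]
    · simp [hi, Ne.symm hi, hj]
end Stmt14Aux
namespace Stmt14Aux
open Matrix
variable {n : ℕ}

/-- Generic expansion of the triple product appearing in mutations. -/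
lemma tri (k : Fin n) (Y B X : Matrix (Fin n) (Fin n) ℝ) :
    (Jmat k + colOnly k Y) * B * (Jmat k + rowOnly k X)
      = Matrix.of fun i j =>
          (if i = k then (-1:ℝ) else 1) * (if j = k then (-1:ℝ) else 1) * B i j
          + (if i = k then (-1:ℝ) else 1) * (B i k * X k j)
          + (if j = k then (-1:ℝ) else 1) * (Y i k * B k j)
          + Y i k * B k k * X k j := by
  rw [add_mul, add_mul, mul_add, mul_add, colOnly_mul]
  rw [show (Jmat k * B : Matrix (Fin n) (Fin n) ℝ) * Jmat k
      = (Matrix.of fun i j => if i = k then -B i j else B i j) * Jmat k from by rw [Jmat_mul]]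
  rw [show (Jmat k * B : Matrix (Fin n) (Fin n) ℝ) * rowOnly k X
      = (Matrix.of fun i j => if i = k then -B i j else B i j) * rowOnly k X from by
        rw [Jmat_mul]]
  rw [mul_Jmat, mul_Jmat, mul_rowOnly, mul_rowOnly]
  ext i j
  simp only [Matrix.add_apply, Matrix.of_apply]
  rcases eq_or_ne i k with hi | hi <;> rcases eq_or_ne j k with hj | hj <;>
    simp [hi, hj] <;> ring

lemma max_sub (x : ℝ) : max x 0 - max (-x) 0 = x := by
  rcases le_total x 0 with hx | hx
  · rw [max_eq_right hx, max_eq_left (by linarith)]; ring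
  · rw [max_eq_left hx, max_eq_right (by linarith)]; ring

/-- Mutation can be computed with either choice of sign, given `B k k = 0`. -/
lemma mutB_alt (B : Matrix (Fin n) (Fin n) ℝ) (k : Fin n) (hk : B k k = 0) :
    mutB B k = (Jmat k + colOnly k (matPos B)) * B * (Jmat k + rowOnly k (matPos (-B))) := by
  rw [mutB, tri, tri]
  ext i j
  simp only [Matrix.of_apply, matPos, Matrix.neg_apply, hk, neg_zero, max_self, mul_zero,
    zero_mul, add_zero]
  have h1 := max_sub (B i k)
  have h2 := max_sub (B k j)
  rcases eq_or_ne i k with hi | hi <;> rcases eq_or_ne j k with hj | hj <;>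
    simp [hi, hj, hk] <;>
    try linear_combination B i k * h2 - B k j * h1

/-- Mutation preserves the skew-symmetrizer. -/
lemma skew_step {dd : Fin n → ℝ} {B : Matrix (Fin n) (Fin n) ℝ}
    (hdd : ∀ i, 0 < dd i)
    (h : (Matrix.diagonal dd * B)ᵀ = -(Matrix.diagonal dd * B)) (k : Fin n) :
    (Matrix.diagonal dd * mutB B k)ᵀ = -(Matrix.diagonal dd * mutB B k) := by
  set S := Jmat k + rowOnly k (matPos B) with hS
  have h1 : Matrix.diagonal dd * mutB B k = Sᵀ * (Matrix.diagonal dd * B) * S := by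
    rw [mutB, ← mul_assoc, ← mul_assoc, keySwap hdd h k, mul_assoc _ (Matrix.diagonal dd) B]
  rw [h1, Matrix.transpose_mul, Matrix.transpose_mul, Matrix.transpose_transpose, h]
  simp [Matrix.mul_neg, Matrix.neg_mul, mul_assoc]

/-- Skew condition for `-B`. -/
lemma skew_neg {dd : Fin n → ℝ} {B : Matrix (Fin n) (Fin n) ℝ}
    (h : (Matrix.diagonal dd * B)ᵀ = -(Matrix.diagonal dd * B)) :
    (Matrix.diagonal dd * (-B))ᵀ = -(Matrix.diagonal dd * (-B)) := by
  rw [Matrix.mul_neg, Matrix.transpose_neg, h]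

/-- The key duality computation, positive-sign version. -/
lemma keyDualPos {dd : Fin n → ℝ} {B : Matrix (Fin n) (Fin n) ℝ}
    (hdd : ∀ i, 0 < dd i)
    (h : (Matrix.diagonal dd * B)ᵀ = -(Matrix.diagonal dd * B)) (k : Fin n) :
    (Jmat k + colOnly k (matPos (-B)))ᵀ * Matrix.diagonal dd * (Jmat k + rowOnly k (matPos B))
      = Matrix.diagonal dd := by
  have hs := keySwap hdd h k
  have h2 : (Jmat k + colOnly k (matPos (-B)))ᵀ * Matrix.diagonal dd
      = Matrix.diagonal dd * (Jmat k + rowOnly k (matPos B)) := by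
    have := congrArg Matrix.transpose hs
    rwa [Matrix.transpose_mul, Matrix.transpose_mul, Matrix.transpose_transpose,
      Matrix.diagonal_transpose] at this
  rw [h2, mul_assoc, sq_row _ _ (by simp [matPos, diag_zero hdd h k]), mul_one]

/-- The key duality computation, negative-sign version. -/
lemma keyDualNeg {dd : Fin n → ℝ} {B : Matrix (Fin n) (Fin n) ℝ}
    (hdd : ∀ i, 0 < dd i)
    (h : (Matrix.diagonal dd * B)ᵀ = -(Matrix.diagonal dd * B)) (k : Fin n) :
    (Jmat k + colOnly k (matPos B))ᵀ * Matrix.diagonal dd * (Jmat k + rowOnly k (matPos (-B)))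
      = Matrix.diagonal dd := by
  have := keyDualPos hdd (skew_neg h) k
  rwa [neg_neg] at this

end Stmt14Aux
namespace Stmt14Aux
open Matrix
variable {n : ℕ}

lemma colOnly_matPos_neg_pos {C : Matrix (Fin n) (Fin n) ℝ} {k : Fin n}
    (h : ∀ i, 0 ≤ C i k) : colOnly k (matPos (-C)) = 0 := by
  ext i j
  simp only [colOnly, matPos, Matrix.neg_apply, Matrix.zero_apply]
  split
  · next hj => subst hj; rw [max_eq_right (by linarith [h i])]
  · rfl

lemma colOnly_matPos_neg_neg {C : Matrix (Fin n) (Fin n) ℝ} {k : Fin n}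
    (h : ∀ i, C i k ≤ 0) : colOnly k (matPos (-C)) = colOnly k (-C) := by
  ext i j
  simp only [colOnly, matPos, Matrix.neg_apply]
  split
  · next hj => subst hj; rw [max_eq_left (by linarith [h i])]
  · rfl

lemma Cstep_pos {C Bt : Matrix (Fin n) (Fin n) ℝ} {k : Fin n} (h : ∀ i, 0 ≤ C i k) :
    C * Jmat k + C * rowOnly k (matPos Bt) + colOnly k (matPos (-C)) * Bt
      = C * (Jmat k + rowOnly k (matPos Bt)) := by
  rw [colOnly_matPos_neg_pos h, Matrix.zero_mul, add_zero, mul_add]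

lemma Gstep_pos {G Bt B0 C : Matrix (Fin n) (Fin n) ℝ} {k : Fin n} (h : ∀ i, 0 ≤ C i k) :
    G * Jmat k + G * colOnly k (matPos (-Bt)) - B0 * colOnly k (matPos (-C))
      = G * (Jmat k + colOnly k (matPos (-Bt))) := by
  rw [colOnly_matPos_neg_pos h, Matrix.mul_zero, sub_zero, mul_add]

lemma Cstep_neg {C Bt : Matrix (Fin n) (Fin n) ℝ} {k : Fin n} (h : ∀ i, C i k ≤ 0) :
    C * Jmat k + C * rowOnly k (matPos Bt) + colOnly k (matPos (-C)) * Bt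
      = C * (Jmat k + rowOnly k (matPos (-Bt))) := by
  rw [colOnly_matPos_neg_neg h, mul_add, colOnly_mul, mul_rowOnly, mul_rowOnly]
  ext i j
  simp only [Matrix.add_apply, Matrix.of_apply, matPos, Matrix.neg_apply]
  linear_combination (C i k) * max_sub (Bt k j)

lemma Gstep_neg {G Bt B0 C : Matrix (Fin n) (Fin n) ℝ} {k : Fin n} (h : ∀ i, C i k ≤ 0)
    (hGB : G * Bt = B0 * C) :
    G * Jmat k + G * colOnly k (matPos (-Bt)) - B0 * colOnly k (matPos (-C))
      = G * (Jmat k + colOnly k (matPos Bt)) := by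
  have h1 : B0 * colOnly k (matPos (-C)) = -(G * colOnly k Bt) := by
    rw [colOnly_matPos_neg_neg h, mul_colOnly, mul_colOnly]
    rw [Matrix.mul_neg, hGB]
    ext i j
    simp only [colOnly, Matrix.neg_apply]
    split <;> simp
  have h2 : colOnly k (matPos (-Bt)) + colOnly k Bt = colOnly k (matPos Bt) := by
    ext i j
    simp only [colOnly, Matrix.add_apply, matPos, Matrix.neg_apply]
    split
    · linear_combination -(max_sub (Bt i j))
    · simp
  rw [h1, sub_neg_eq_add, add_assoc, ← mul_add, h2, mul_add]

end Stmt14Aux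
namespace Stmt14Aux
open Matrix
variable {n : ℕ}

lemma BCG_append (B : Matrix (Fin n) (Fin n) ℝ) (w : List (Fin n)) (k : Fin n) :
    BCG B (w ++ [k]) = stepBCG B (BCG B w) k := by
  simp [BCG, List.foldl_append]

/-- The combined invariant, proved by induction on the path. -/
lemma invariant (B : Matrix (Fin n) (Fin n) ℝ) (dd : Fin n → ℝ)
    (hdd : ∀ i, 0 < dd i)
    (hskew : (Matrix.diagonal dd * B)ᵀ = -(Matrix.diagonal dd * B))
    (d : ℕ)
    (hcoh : ∀ w : List (Fin n), w.length ≤ d → ColSignCoherent (Cpat B w)) :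
    ∀ w : List (Fin n),
      (Matrix.diagonal dd * Bpat B w)ᵀ = -(Matrix.diagonal dd * Bpat B w) ∧
      (w.length ≤ d + 1 →
        Gpat B w * Bpat B w = B * Cpat B w ∧
        (Gpat B w)ᵀ * Matrix.diagonal dd * Cpat B w = Matrix.diagonal dd) := by
  intro w
  induction w using List.reverseRecOn with
  | nil =>
    refine ⟨hskew, fun _ => ⟨?_, ?_⟩⟩
    · simp [Bpat, Cpat, Gpat, BCG]
    · simp [Cpat, Gpat, BCG]
  | append_singleton w k ih =>
    have hB' : Bpat B (w ++ [k]) = mutB (Bpat B w) k := by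
      simp [Bpat, BCG_append, stepBCG, Cpat, Gpat]
    have hC' : Cpat B (w ++ [k]) =
        Cpat B w * Jmat k + Cpat B w * rowOnly k (matPos (Bpat B w))
          + colOnly k (matPos (-(Cpat B w))) * Bpat B w := by
      simp [Cpat, BCG_append, stepBCG, Bpat]
    have hG' : Gpat B (w ++ [k]) =
        Gpat B w * Jmat k + Gpat B w * colOnly k (matPos (-(Bpat B w)))
          - B * colOnly k (matPos (-(Cpat B w))) := by
      simp [Gpat, BCG_append, stepBCG, Bpat, Cpat]
    set Bt := Bpat B w
    set C := Cpat B w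
    set G := Gpat B w
    have hskw := ih.1
    constructor
    · rw [hB']
      exact skew_step hdd hskw k
    · intro hlen
      have hwlen : w.length ≤ d := by
        simp only [List.length_append, List.length_singleton] at hlen
        omega
      obtain ⟨hGB, hdual⟩ := ih.2 (le_trans hwlen (Nat.le_succ d))
      have hkk : Bt k k = 0 := diag_zero hdd hskw k
      rcases hcoh w hwlen k with hpos | hneg
      · -- positive column
        have hC2 : Cpat B (w ++ [k]) = C * (Jmat k + rowOnly k (matPos Bt)) := by
          rw [hC']; exact Cstep_pos hpos
        have hG2 : Gpat B (w ++ [k]) = G * (Jmat k + colOnly k (matPos (-Bt))) := by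
          rw [hG']; exact Gstep_pos hpos
        set S := Jmat k + rowOnly k (matPos Bt) with hS
        set T := Jmat k + colOnly k (matPos (-Bt)) with hT
        have hTT : T * T = 1 := sq_col _ _ (by simp [matPos, hkk])
        constructor
        · rw [hB', hC2, hG2, mutB]
          have : G * T * ((Jmat k + colOnly k (matPos (-Bt))) * Bt * S)
              = G * ((T * T) * (Bt * S)) := by
            rw [← hT]; simp only [mul_assoc]
          rw [this, hTT, one_mul, ← mul_assoc, hGB, mul_assoc]
        · rw [hC2, hG2, Matrix.transpose_mul]
          have : Tᵀ * Gᵀ * Matrix.diagonal dd * (C * S)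
              = Tᵀ * (Gᵀ * Matrix.diagonal dd * C) * S := by
            simp only [mul_assoc]
          rw [this, hdual, hT, hS]
          exact keyDualPos hdd hskw k
      · -- negative column
        have hC2 : Cpat B (w ++ [k]) = C * (Jmat k + rowOnly k (matPos (-Bt))) := by
          rw [hC']; exact Cstep_neg hneg
        have hG2 : Gpat B (w ++ [k]) = G * (Jmat k + colOnly k (matPos Bt)) := by
          rw [hG']; exact Gstep_neg hneg hGB
        set S := Jmat k + rowOnly k (matPos (-Bt)) with hS
        set T := Jmat k + colOnly k (matPos Bt) with hT
        have hTT : T * T = 1 := sq_col _ _ (by simp [matPos, hkk])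
        constructor
        · rw [hB', hC2, hG2, mutB_alt Bt k hkk]
          have : G * T * ((Jmat k + colOnly k (matPos Bt)) * Bt * S)
              = G * ((T * T) * (Bt * S)) := by
            rw [← hT]; simp only [mul_assoc]
          rw [this, hTT, one_mul, ← mul_assoc, hGB, mul_assoc]
        · rw [hC2, hG2, Matrix.transpose_mul]
          have : Tᵀ * Gᵀ * Matrix.diagonal dd * (C * S)
              = Tᵀ * (Gᵀ * Matrix.diagonal dd * C) * S := by
            simp only [mul_assoc]
          rw [this, hdual, hT, hS]
          exact keyDualNeg hdd hskw k

end Stmt14Aux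

/-- second duality: if `D = diag dd` is a positive skew-symmetrizer of `B`
and the `C`-pattern is sign-coherent up to `d`, then for every vertex at distance `≤ d+1`
one has `D⁻¹ G_tᵀ D C_t = I`; equivalently `⟨g_{i;t}, c_{j;t}⟩_D = dd i · δ_ij`. -/
theorem stmt14 {n : ℕ} (B : Matrix (Fin n) (Fin n) ℝ) (dd : Fin n → ℝ)
    (hdd : ∀ i, 0 < dd i)
    (hskew : (Matrix.diagonal dd * B)ᵀ = -(Matrix.diagonal dd * B))
    (d : ℕ)
    (hcoh : ∀ w : List (Fin n), w.length ≤ d → ColSignCoherent (Cpat B w)) :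
    ∀ w : List (Fin n), w.length ≤ d + 1 →
      Matrix.diagonal (fun i => (dd i)⁻¹) * (Gpat B w)ᵀ * Matrix.diagonal dd * Cpat B w
        = 1 ∧
      ∀ i j, ((Gpat B w)ᵀ * Matrix.diagonal dd * Cpat B w) i j
        = if i = j then dd i else 0 := by
  intro w hlen
  obtain ⟨-, h2⟩ := Stmt14Aux.invariant B dd hdd hskew d hcoh w
  obtain ⟨-, hdual⟩ := h2 hlen
  constructor
  · have : Matrix.diagonal (fun i => (dd i)⁻¹) * (Gpat B w)ᵀ * Matrix.diagonal dd * Cpat B w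
        = Matrix.diagonal (fun i => (dd i)⁻¹) * ((Gpat B w)ᵀ * Matrix.diagonal dd * Cpat B w) := by
      simp only [mul_assoc]
    rw [this, hdual, Matrix.diagonal_mul_diagonal]
    have : (fun i => (dd i)⁻¹ * dd i) = fun _ => (1:ℝ) := by
      funext i
      exact inv_mul_cancel₀ (hdd i).ne'
    rw [this, Matrix.diagonal_one]
  · intro i j
    rw [hdual, Matrix.diagonal_apply]

end
end

section
/- Let B be a real skew-symmetrizable matrix in the sign-coherent class, with skew-symmetrizer D. If some c-vector satisfies c_{i;t} = α e_j for a scalar α, then every g-vector g_{l;t} with l ≠ i has j-th entry zero, and the j-th entry β of g_{i;t} satisfies α·β = d_i/d_j. Consequently, α = ±√(d_i/d_j) holds if and only if β = ±√(d_i/d_j), if and only if α = β. -/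
open Matrix

noncomputable section

namespace Stmt17Aux


variable {n : ℕ}

lemma mul_rowOnly_apply (M Y : Matrix (Fin n) (Fin n) ℝ) (k i j : Fin n) :
    (M * rowOnly k Y) i j = M i k * Y k j := by
  simp [Matrix.mul_apply, rowOnly, mul_ite, mul_zero]

lemma colOnly_mul_apply (X M : Matrix (Fin n) (Fin n) ℝ) (k i j : Fin n) :
    (colOnly k X * M) i j = X i k * M k j := by
  simp [Matrix.mul_apply, colOnly, ite_mul, zero_mul]

lemma mul_colOnly (M X : Matrix (Fin n) (Fin n) ℝ) (k : Fin n) :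
    M * colOnly k X = colOnly k (M * X) := by
  ext i j
  by_cases h : j = k <;> simp [colOnly, Matrix.mul_apply, h]

lemma rowOnly_mul (Y M : Matrix (Fin n) (Fin n) ℝ) (k : Fin n) :
    rowOnly k Y * M = rowOnly k (Y * M) := by
  ext i j
  by_cases h : i = k <;> simp [rowOnly, Matrix.mul_apply, h]

lemma Jmat_mul_apply (M : Matrix (Fin n) (Fin n) ℝ) (k i j : Fin n) :
    (Jmat k * M) i j = (if i = k then -1 else 1) * M i j := by
  simp [Jmat, Matrix.diagonal_mul]

lemma mul_Jmat_apply (M : Matrix (Fin n) (Fin n) ℝ) (k i j : Fin n) :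
    (M * Jmat k) i j = M i j * (if j = k then -1 else 1) := by
  simp [Jmat, Matrix.mul_diagonal]

lemma Jmat_sq (k : Fin n) : Jmat k * Jmat k = 1 := by
  have h : (fun i : Fin n => (if i = k then (-1:ℝ) else 1) * (if i = k then -1 else 1))
      = fun _ => 1 := by funext i; split_ifs <;> norm_num
  rw [Jmat, Matrix.diagonal_mul_diagonal, h, Matrix.diagonal_one]

def EM {n : ℕ} (B : Matrix (Fin n) (Fin n) ℝ) (k : Fin n) (s : ℝ) : Matrix (Fin n) (Fin n) ℝ :=
  Jmat k + colOnly k (matPos (-(s • B)))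

def FM {n : ℕ} (B : Matrix (Fin n) (Fin n) ℝ) (k : Fin n) (s : ℝ) : Matrix (Fin n) (Fin n) ℝ :=
  Jmat k + rowOnly k (matPos (s • B))

lemma max_sub (x : ℝ) : max x 0 - x = max (-x) 0 := by
  rcases le_total 0 x with h | h
  · rw [max_eq_left h, max_eq_right (neg_nonpos.mpr h)]; ring
  · rw [max_eq_right h, max_eq_left (neg_nonneg.mpr h)]; ring

lemma max_add (x : ℝ) : max (-x) 0 + x = max x 0 := by
  have := max_sub x; linarith

lemma max_diff (x : ℝ) : max x 0 - max (-x) 0 = x := by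
  have h1 := max_sub x
  have h2 := max_sub (-x)
  rw [neg_neg] at h2
  linarith

variable {B : Matrix (Fin n) (Fin n) ℝ} {k : Fin n} {dd : Fin n → ℝ}

lemma FM_sq (hB : B k k = 0) (s : ℝ) : FM B k s * FM B k s = 1 := by
  have hY : matPos (s • B) k k = 0 := by
    simp [matPos, Matrix.smul_apply, hB]
  set Y := matPos (s • B) with hYdef
  have key : Jmat k * rowOnly k Y + rowOnly k Y * Jmat k + rowOnly k Y * rowOnly k Y = 0 := by
    ext i j
    have h3 : (rowOnly k Y * rowOnly k Y) i j = (rowOnly k Y) i k * Y k j :=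
      mul_rowOnly_apply _ _ _ _ _
    simp only [Matrix.add_apply, Jmat_mul_apply, mul_Jmat_apply, h3, rowOnly, Matrix.zero_apply]
    by_cases hi : i = k <;> by_cases hj : j = k <;> simp [hi, hj, hY] <;> ring
  have expand : FM B k s * FM B k s =
      Jmat k * Jmat k + (Jmat k * rowOnly k Y + rowOnly k Y * Jmat k + rowOnly k Y * rowOnly k Y) := by
    rw [FM]; noncomm_ring
  rw [expand, key, Jmat_sq, add_zero]

lemma EM_sq (hB : B k k = 0) (s : ℝ) : EM B k s * EM B k s = 1 := by
  have hX : matPos (-(s • B)) k k = 0 := by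
    simp [matPos, Matrix.smul_apply, hB]
  set X := matPos (-(s • B)) with hXdef
  have key : Jmat k * colOnly k X + colOnly k X * Jmat k + colOnly k X * colOnly k X = 0 := by
    ext i j
    have h3 : (colOnly k X * colOnly k X) i j = X i k * (colOnly k X) k j :=
      colOnly_mul_apply _ _ _ _ _
    simp only [Matrix.add_apply, Jmat_mul_apply, mul_Jmat_apply, h3, colOnly, Matrix.zero_apply]
    by_cases hi : i = k <;> by_cases hj : j = k <;> simp [hi, hj, hX] <;> ring
  have expand : EM B k s * EM B k s =
      Jmat k * Jmat k + (Jmat k * colOnly k X + colOnly k X * Jmat k + colOnly k X * colOnly k X) := by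
    rw [EM]; noncomm_ring
  rw [expand, key, Jmat_sq, add_zero]

lemma Bkk_zero (hdd : ∀ i, 0 < dd i) (hsk : ∀ a b, dd a * B a b = -(dd b * B b a)) :
    B k k = 0 := by
  have h := hsk k k
  have h2 : dd k * B k k = 0 := by linarith
  rcases mul_eq_zero.mp h2 with h3 | h3
  · exact absurd h3 (ne_of_gt (hdd k))
  · exact h3

/-- `D E_s = F_sᵀ D` (uses skew-symmetry of `DB` and positivity of `D`). -/
lemma diag_EM (hdd : ∀ i, 0 < dd i) (hsk : ∀ a b, dd a * B a b = -(dd b * B b a)) (s : ℝ) :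
    Matrix.diagonal dd * EM B k s = (FM B k s)ᵀ * Matrix.diagonal dd := by
  rw [EM, FM, Matrix.mul_add, Matrix.transpose_add, Matrix.add_mul]
  have h1 : Matrix.diagonal dd * Jmat k = (Jmat k)ᵀ * Matrix.diagonal dd := by
    rw [Jmat, Matrix.diagonal_transpose, Matrix.diagonal_mul_diagonal,
      Matrix.diagonal_mul_diagonal]
    have e : (fun i => dd i * (if i = k then (-1:ℝ) else 1))
        = fun i => (if i = k then (-1:ℝ) else 1) * dd i := by funext a; ring
    rw [e]
  rw [h1]
  congr 1
  ext i j
  rw [Matrix.diagonal_mul, Matrix.mul_diagonal, Matrix.transpose_apply]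
  simp only [colOnly, rowOnly, matPos, Matrix.smul_apply, Matrix.neg_apply, smul_eq_mul]
  by_cases hj : j = k
  · subst hj
    simp only [eq_self_iff_true, if_true]
    rw [mul_max_of_nonneg _ _ (hdd i).le, max_mul_of_nonneg _ _ (hdd j).le]
    have e : dd i * -(s * B i j) = s * B j i * dd j := by
      linear_combination (-s) * hsk i j
    rw [e, mul_zero, zero_mul]
  · simp [hj]

lemma mutB_eq : mutB B k = EM B k 1 * B * FM B k 1 := by
  rw [mutB, EM, FM, one_smul]

lemma triple_decomp (hB : B k k = 0) (s : ℝ) :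
    EM B k s * B * FM B k s =
      Jmat k * B * Jmat k + Jmat k * B * rowOnly k (matPos (s • B)) +
        colOnly k (matPos (-(s • B))) * B * Jmat k := by
  have hzero : colOnly k (matPos (-(s • B))) * B * rowOnly k (matPos (s • B)) = 0 := by
    ext i j
    rw [mul_rowOnly_apply, colOnly_mul_apply]
    simp [hB]
  have expand : EM B k s * B * FM B k s =
      Jmat k * B * Jmat k + Jmat k * B * rowOnly k (matPos (s • B)) +
        colOnly k (matPos (-(s • B))) * B * Jmat k +
        colOnly k (matPos (-(s • B))) * B * rowOnly k (matPos (s • B)) := by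
    rw [EM, FM]; noncomm_ring
  rw [expand, hzero, add_zero]

lemma bothsign (hB : B k k = 0) :
    EM B k 1 * B * FM B k 1 = EM B k (-1) * B * FM B k (-1) := by
  rw [triple_decomp hB, triple_decomp hB]
  have key : ∀ s : ℝ, ∀ i j : Fin n,
      (Jmat k * B * rowOnly k (matPos (s • B)) + colOnly k (matPos (-(s • B))) * B * Jmat k) i j
      = (if i = k then (-1:ℝ) else 1) * B i k * max (s * B k j) 0
        + max (-(s * B i k)) 0 * B k j * (if j = k then (-1:ℝ) else 1) := by
    intro s i j
    rw [Matrix.add_apply, mul_rowOnly_apply, mul_Jmat_apply, colOnly_mul_apply,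
      Jmat_mul_apply]
    simp [matPos, Matrix.smul_apply, Matrix.neg_apply, smul_eq_mul]
  have main : ∀ i j : Fin n,
      (Jmat k * B * rowOnly k (matPos ((1:ℝ) • B)) +
        colOnly k (matPos (-((1:ℝ) • B))) * B * Jmat k) i j
      = (Jmat k * B * rowOnly k (matPos ((-1:ℝ) • B)) +
        colOnly k (matPos (-((-1:ℝ) • B))) * B * Jmat k) i j := by
    intro i j
    rw [key, key]
    by_cases hi : i = k
    · subst hi; simp [hB]
    · by_cases hj : j = k
      · subst hj; simp [hB]
      · simp only [if_neg hi, if_neg hj, one_mul, mul_one, neg_one_mul, neg_neg]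
        have h1 := max_diff (B i k)
        have h2 := max_diff (B k j)
        linear_combination (B i k) * h2 - (B k j) * h1
  have : Jmat k * B * rowOnly k (matPos ((1:ℝ) • B)) +
        colOnly k (matPos (-((1:ℝ) • B))) * B * Jmat k
      = Jmat k * B * rowOnly k (matPos ((-1:ℝ) • B)) +
        colOnly k (matPos (-((-1:ℝ) • B))) * B * Jmat k := by
    ext i j; exact main i j
  rw [add_assoc, add_assoc, this]

lemma colOnly_matPos_neg_of_nonneg (C : Matrix (Fin n) (Fin n) ℝ) (k : Fin n)
    (h : ∀ r, 0 ≤ C r k) : colOnly k (matPos (-C)) = 0 := by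
  ext i j
  simp only [colOnly, matPos, Matrix.neg_apply, Matrix.zero_apply]
  split_ifs with hj
  · subst hj; exact max_eq_right (neg_nonpos.mpr (h i))
  · rfl

lemma colOnly_matPos_neg_of_nonpos (C : Matrix (Fin n) (Fin n) ℝ) (k : Fin n)
    (h : ∀ r, C r k ≤ 0) : colOnly k (matPos (-C)) = -(colOnly k C) := by
  ext i j
  simp only [colOnly, matPos, Matrix.neg_apply]
  split_ifs with hj
  · subst hj; exact max_eq_left (neg_nonneg.mpr (h i))
  · simp

variable {C G B0 : Matrix (Fin n) (Fin n) ℝ}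

lemma Cstep_pos (h : ∀ r, 0 ≤ C r k) :
    C * Jmat k + C * rowOnly k (matPos B) + colOnly k (matPos (-C)) * B = C * FM B k 1 := by
  rw [colOnly_matPos_neg_of_nonneg _ _ h, Matrix.zero_mul, add_zero, FM, one_smul,
    Matrix.mul_add]

lemma Cstep_neg (h : ∀ r, C r k ≤ 0) :
    C * Jmat k + C * rowOnly k (matPos B) + colOnly k (matPos (-C)) * B = C * FM B k (-1) := by
  rw [colOnly_matPos_neg_of_nonpos _ _ h, Matrix.neg_mul]
  have h1 : colOnly k C * B = C * rowOnly k B := by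
    ext i j; rw [colOnly_mul_apply, mul_rowOnly_apply]
  have h2 : rowOnly k (matPos B) - rowOnly k B = rowOnly k (matPos (-B)) := by
    ext i j
    by_cases hi : i = k <;>
      simp [rowOnly, matPos, Matrix.neg_apply, Matrix.sub_apply, hi, max_sub]
  have h3 : C * rowOnly k (matPos B) - C * rowOnly k B = C * rowOnly k (matPos (-B)) := by
    rw [← Matrix.mul_sub, h2]
  have hs : ((-1:ℝ) • B) = -B := by rw [neg_smul, one_smul]
  rw [h1, FM, hs, Matrix.mul_add, ← h3]
  abel

lemma Gstep_pos (h : ∀ r, 0 ≤ C r k) :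
    G * Jmat k + G * colOnly k (matPos (-B)) - B0 * colOnly k (matPos (-C)) = G * EM B k 1 := by
  rw [colOnly_matPos_neg_of_nonneg _ _ h, Matrix.mul_zero, sub_zero, EM, one_smul,
    Matrix.mul_add]

lemma Gstep_neg (hGB : G * B = B0 * C) (h : ∀ r, C r k ≤ 0) :
    G * Jmat k + G * colOnly k (matPos (-B)) - B0 * colOnly k (matPos (-C)) = G * EM B k (-1) := by
  rw [colOnly_matPos_neg_of_nonpos _ _ h, Matrix.mul_neg, sub_neg_eq_add]
  have h1 : B0 * colOnly k C = G * colOnly k B := by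
    rw [mul_colOnly, ← hGB, ← mul_colOnly]
  have h2 : colOnly k (matPos (-B)) + colOnly k B = colOnly k (matPos B) := by
    ext i j
    by_cases hj : j = k <;>
      simp [colOnly, matPos, Matrix.neg_apply, Matrix.add_apply, hj, max_add]
  have hs : -((-1:ℝ) • B) = B := by rw [neg_smul, one_smul, neg_neg]
  rw [h1, EM, hs, ← h2, Matrix.mul_add, Matrix.mul_add]
  abel

/-- The invariant carried along mutation paths. -/
def Inv (B0 : Matrix (Fin n) (Fin n) ℝ) (dd : Fin n → ℝ)
    (X : Matrix (Fin n) (Fin n) ℝ × Matrix (Fin n) (Fin n) ℝ × Matrix (Fin n) (Fin n) ℝ) :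
    Prop :=
  (Matrix.diagonal dd * X.1)ᵀ = -(Matrix.diagonal dd * X.1) ∧
  X.2.2ᵀ * Matrix.diagonal dd * X.2.1 = Matrix.diagonal dd ∧
  X.2.2 * X.1 = B0 * X.2.1

lemma skew_entry (hskew : (Matrix.diagonal dd * B)ᵀ = -(Matrix.diagonal dd * B)) :
    ∀ a b, dd a * B a b = -(dd b * B b a) := by
  intro a b
  have h := congrFun (congrFun hskew b) a
  simpa [Matrix.transpose_apply, Matrix.diagonal_mul] using h

lemma inv_step_core (hdd : ∀ i, 0 < dd i) (s : ℝ)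
    (hsk' : ∀ a b, dd a * B a b = -(dd b * B b a))
    (hdual : Gᵀ * Matrix.diagonal dd * C = Matrix.diagonal dd)
    (hGB : G * B = B0 * C) :
    Inv B0 dd (EM B k s * B * FM B k s, C * FM B k s, G * EM B k s) := by
  have hB : B k k = 0 := Bkk_zero hdd hsk'
  have hDE := diag_EM (k := k) hdd hsk' s
  have hDB : (Matrix.diagonal dd * B)ᵀ = -(Matrix.diagonal dd * B) := by
    ext a b
    simp only [Matrix.transpose_apply, Matrix.diagonal_mul, Matrix.neg_apply]
    have := hsk' b a
    linarith
  refine ⟨?_, ?_, ?_⟩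
  · have e : Matrix.diagonal dd * (EM B k s * B * FM B k s)
        = (FM B k s)ᵀ * (Matrix.diagonal dd * B) * FM B k s := by
      calc Matrix.diagonal dd * (EM B k s * B * FM B k s)
          = (Matrix.diagonal dd * EM B k s) * (B * FM B k s) := by noncomm_ring
        _ = ((FM B k s)ᵀ * Matrix.diagonal dd) * (B * FM B k s) := by rw [hDE]
        _ = (FM B k s)ᵀ * (Matrix.diagonal dd * B) * FM B k s := by noncomm_ring
    show (Matrix.diagonal dd * (EM B k s * B * FM B k s))ᵀ
        = -(Matrix.diagonal dd * (EM B k s * B * FM B k s))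
    rw [e, Matrix.transpose_mul, Matrix.transpose_mul, Matrix.transpose_transpose, hDB]
    noncomm_ring
  · show (G * EM B k s)ᵀ * Matrix.diagonal dd * (C * FM B k s) = Matrix.diagonal dd
    calc (G * EM B k s)ᵀ * Matrix.diagonal dd * (C * FM B k s)
        = (EM B k s)ᵀ * (Gᵀ * Matrix.diagonal dd * C) * FM B k s := by
          rw [Matrix.transpose_mul]; noncomm_ring
      _ = (EM B k s)ᵀ * Matrix.diagonal dd * FM B k s := by rw [hdual]
      _ = (Matrix.diagonal dd * EM B k s)ᵀ * FM B k s := by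
          rw [Matrix.transpose_mul, Matrix.diagonal_transpose]
      _ = ((FM B k s)ᵀ * Matrix.diagonal dd)ᵀ * FM B k s := by rw [hDE]
      _ = Matrix.diagonal dd * (FM B k s * FM B k s) := by
          rw [Matrix.transpose_mul, Matrix.diagonal_transpose, Matrix.transpose_transpose]
          noncomm_ring
      _ = Matrix.diagonal dd := by rw [FM_sq hB, Matrix.mul_one]
  · show (G * EM B k s) * (EM B k s * B * FM B k s) = B0 * (C * FM B k s)
    calc (G * EM B k s) * (EM B k s * B * FM B k s)
        = G * (EM B k s * EM B k s) * B * FM B k s := by noncomm_ring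
      _ = G * B * FM B k s := by rw [EM_sq hB, Matrix.mul_one]
      _ = B0 * (C * FM B k s) := by rw [hGB]; noncomm_ring

lemma step_inv (B0 : Matrix (Fin n) (Fin n) ℝ) (dd : Fin n → ℝ) (hdd : ∀ i, 0 < dd i)
    (X : Matrix (Fin n) (Fin n) ℝ × Matrix (Fin n) (Fin n) ℝ × Matrix (Fin n) (Fin n) ℝ)
    (k : Fin n) (hX : Inv B0 dd X)
    (hcol : (∀ r, 0 ≤ X.2.1 r k) ∨ (∀ r, X.2.1 r k ≤ 0)) :
    Inv B0 dd (stepBCG B0 X k) := by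
  obtain ⟨B, C, G⟩ := X
  obtain ⟨hsk, hdual, hGB⟩ := hX
  simp only at hsk hdual hGB hcol
  have hsk' := skew_entry hsk
  have hB : B k k = 0 := Bkk_zero hdd hsk'
  rcases hcol with h | h
  · have e : stepBCG B0 (B, C, G) k
        = (EM B k 1 * B * FM B k 1, C * FM B k 1, G * EM B k 1) := by
      rw [stepBCG]
      refine congrArg₂ Prod.mk ?_ (congrArg₂ Prod.mk ?_ ?_)
      · exact mutB_eq
      · exact Cstep_pos h
      · exact Gstep_pos h
    rw [e]
    exact inv_step_core hdd 1 hsk' hdual hGB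
  · have e : stepBCG B0 (B, C, G) k
        = (EM B k (-1) * B * FM B k (-1), C * FM B k (-1), G * EM B k (-1)) := by
      rw [stepBCG]
      refine congrArg₂ Prod.mk ?_ (congrArg₂ Prod.mk ?_ ?_)
      · exact mutB_eq.trans (bothsign hB)
      · exact Cstep_neg h
      · exact Gstep_neg hGB h
    rw [e]
    exact inv_step_core hdd (-1) hsk' hdual hGB

lemma inv_all (B0 : Matrix (Fin n) (Fin n) ℝ) (dd : Fin n → ℝ) (hdd : ∀ i, 0 < dd i)
    (hskew0 : (Matrix.diagonal dd * B0)ᵀ = -(Matrix.diagonal dd * B0))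
    (hsc : ∀ w, ColSignCoherent (Cpat B0 w)) :
    ∀ w, Inv B0 dd (BCG B0 w) := by
  intro w
  induction w using List.reverseRecOn with
  | nil =>
      refine ⟨hskew0, ?_, ?_⟩
      · show (1 : Matrix (Fin n) (Fin n) ℝ)ᵀ * Matrix.diagonal dd * 1 = Matrix.diagonal dd
        simp
      · show (1 : Matrix (Fin n) (Fin n) ℝ) * B0 = B0 * 1
        simp
  | append_singleton w k ih =>
      have e : BCG B0 (w ++ [k]) = stepBCG B0 (BCG B0 w) k := by
        simp [BCG, List.foldl_append]
      rw [e]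
      exact step_inv B0 dd hdd _ k ih (hsc w k)

lemma sign_lemma (α β s : ℝ) (hs : 0 < s) (h : α * β = s * s) :
    ((α = s ∨ α = -s) ↔ (β = s ∨ β = -s)) ∧ ((α = s ∨ α = -s) ↔ α = β) := by
  have fwd : (α = s ∨ α = -s) → (β = s ∨ β = -s) ∧ α = β := by
    rintro (ha | ha)
    · have h' : s * β = s * s := by linear_combination h - β * ha
      have hb : β = s := mul_left_cancel₀ hs.ne' h'
      exact ⟨Or.inl hb, by rw [ha, hb]⟩
    · have h' : (-s) * β = (-s) * (-s) := by linear_combination h - β * ha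
      have hb : β = -s := mul_left_cancel₀ (neg_ne_zero.mpr hs.ne') h'
      exact ⟨Or.inr hb, by rw [ha, hb]⟩
  constructor
  · constructor
    · intro ha; exact (fwd ha).1
    · rintro (hb | hb)
      · have h' : α * s = s * s := by linear_combination h - α * hb
        exact Or.inl (mul_right_cancel₀ hs.ne' h')
      · have h' : α * (-s) = (-s) * (-s) := by linear_combination h - α * hb
        exact Or.inr (mul_right_cancel₀ (neg_ne_zero.mpr hs.ne') h')
  · constructor
    · intro ha; exact (fwd ha).2
    · intro hab
      subst hab
      exact mul_self_eq_mul_self_iff.mp h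

end Stmt17Aux

/-- for `B` in the sign-coherent class (all `C`-matrices column
sign-coherent and `G`-matrices row sign-coherent), with positive skew-symmetrizer
`D = diag dd`: if the `c`-vector `c_{i;t} = α e_j`, then the `j`-th entry of every
`g`-vector `g_{l;t}` with `l ≠ i` vanishes, the `j`-th entry `β` of `g_{i;t}` satisfies
`α β = dd i / dd j`, and `α = ±√(dd i/dd j) ↔ β = ±√(dd i/dd j) ↔ α = β`. -/
theorem stmt17 {n : ℕ} (B : Matrix (Fin n) (Fin n) ℝ) (dd : Fin n → ℝ)
    (hdd : ∀ i, 0 < dd i)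
    (hskew : (Matrix.diagonal dd * B)ᵀ = -(Matrix.diagonal dd * B))
    (hsc : ∀ w : List (Fin n),
      ColSignCoherent (Cpat B w) ∧ RowSignCoherent (Gpat B w))
    (w : List (Fin n)) (i j : Fin n) (α : ℝ)
    (hci : ∀ r, Cpat B w r i = if r = j then α else 0) :
    (∀ l, l ≠ i → Gpat B w j l = 0) ∧
    α * Gpat B w j i = dd i / dd j ∧
    ((α = Real.sqrt (dd i / dd j) ∨ α = -Real.sqrt (dd i / dd j)) ↔
      (Gpat B w j i = Real.sqrt (dd i / dd j) ∨
        Gpat B w j i = -Real.sqrt (dd i / dd j))) ∧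
    ((α = Real.sqrt (dd i / dd j) ∨ α = -Real.sqrt (dd i / dd j)) ↔
      α = Gpat B w j i) := by
  have hsc' : ∀ w', ColSignCoherent (Cpat B w') := fun w' => (hsc w').1
  obtain ⟨-, hdual, -⟩ := Stmt17Aux.inv_all B dd hdd hskew hsc' w
  have key : ∀ l, Gpat B w j l * dd j * α = if l = i then dd l else 0 := by
    intro l
    have h := congrFun (congrFun hdual l) i
    rw [Matrix.mul_apply] at h
    have hC : ∀ a, (BCG B w).2.1 a i = if a = j then α else 0 := hci
    simp only [Matrix.mul_diagonal, Matrix.transpose_apply] at h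
    simp only [hC] at h
    simp only [mul_ite, mul_zero, Finset.sum_ite_eq', Finset.mem_univ, if_true,
      Matrix.diagonal_apply] at h
    exact h
  have hji : Gpat B w j i * dd j * α = dd i := by simpa using key i
  have hdj : dd j ≠ 0 := (hdd j).ne'
  have hdi : dd i ≠ 0 := (hdd i).ne'
  have hα : α ≠ 0 := by
    intro h0; rw [h0, mul_zero] at hji; exact hdi hji.symm
  have part1 : ∀ l, l ≠ i → Gpat B w j l = 0 := by
    intro l hl
    have h := key l
    rw [if_neg hl] at h
    rcases mul_eq_zero.mp h with h1 | h1
    · rcases mul_eq_zero.mp h1 with h2 | h2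
      · exact h2
      · exact absurd h2 hdj
    · exact absurd h1 hα
  have hprod : α * Gpat B w j i = dd i / dd j := by
    rw [eq_div_iff hdj]
    linear_combination hji
  have hq : 0 < dd i / dd j := div_pos (hdd i) (hdd j)
  have hs : 0 < Real.sqrt (dd i / dd j) := Real.sqrt_pos.mpr hq
  obtain ⟨iff1, iff2⟩ := Stmt17Aux.sign_lemma α (Gpat B w j i) (Real.sqrt (dd i / dd j)) hs
    (by rw [Real.mul_self_sqrt hq.le]; exact hprod)
  exact ⟨part1, hprod, iff1, iff2⟩

end
end

section
/- Let B = [[0, -p],[p, 0]] with 0 < p < 2 and p ≠ 2cos(π/m) for every integer m ≥ 2. Then the C-pattern of B is not sign-coherent: writing p = 2cos θ with π/(m+1) < θ < π/m for some integer m ≥ 2, the C-matrix obtained after m mutations alternating in directions 2,1,2,... starting from the identity contains a column vector proportional to (sin(mθ), sin((m+1)θ)) (or its swap), which has entries of strictly opposite signs since mθ < π < (m+1)θ. -/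
open Matrix

noncomputable section

section
variable (B0 : Matrix (Fin 2) (Fin 2) ℝ)

lemma step_dir1 (p a b c : ℝ) (hp : 0 ≤ p) (hb : 0 ≤ b) (hc : 0 ≤ c)
    (X : Matrix (Fin 2) (Fin 2) ℝ × Matrix (Fin 2) (Fin 2) ℝ × Matrix (Fin 2) (Fin 2) ℝ)
    (hB : X.1 = !![0, -p; p, 0]) (hC : X.2.1 = !![-a, b; -b, c]) :
    (stepBCG B0 X 1).1 = !![0, p; -p, 0] ∧
    (stepBCG B0 X 1).2.1 = !![p*b - a, -b; p*c - b, -c] := by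
  have h1 : max (-p) 0 = 0 := max_eq_right (neg_nonpos.2 hp)
  have h2 : max (-b) 0 = 0 := max_eq_right (neg_nonpos.2 hb)
  have h3 : max (-c) 0 = 0 := max_eq_right (neg_nonpos.2 hc)
  have h4 : max p 0 = p := max_eq_left hp
  constructor <;>
    · ext i j
      fin_cases i <;> fin_cases j <;>
        simp [stepBCG, mutB, Jmat, matPos, rowOnly, colOnly, Matrix.mul_apply,
          Fin.sum_univ_two, Matrix.diagonal, Matrix.vecMul, Matrix.vecHead, Matrix.vecTail, dotProduct, hB, hC, h1, h2, h3, h4] <;> ring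

lemma step_dir0 (p a b c : ℝ) (hp : 0 ≤ p) (hb : 0 ≤ b) (hc : 0 ≤ c)
    (X : Matrix (Fin 2) (Fin 2) ℝ × Matrix (Fin 2) (Fin 2) ℝ × Matrix (Fin 2) (Fin 2) ℝ)
    (hB : X.1 = !![0, p; -p, 0]) (hC : X.2.1 = !![b, -a; c, -b]) :
    (stepBCG B0 X 0).1 = !![0, -p; p, 0] ∧
    (stepBCG B0 X 0).2.1 = !![-b, p*b - a; -c, p*c - b] := by
  have h1 : max (-p) 0 = 0 := max_eq_right (neg_nonpos.2 hp)
  have h2 : max (-b) 0 = 0 := max_eq_right (neg_nonpos.2 hb)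
  have h3 : max (-c) 0 = 0 := max_eq_right (neg_nonpos.2 hc)
  have h4 : max p 0 = p := max_eq_left hp
  constructor <;>
    · ext i j
      fin_cases i <;> fin_cases j <;>
        simp [stepBCG, mutB, Jmat, matPos, rowOnly, colOnly, Matrix.mul_apply,
          Fin.sum_univ_two, Matrix.diagonal, Matrix.vecMul, Matrix.vecHead, Matrix.vecTail, dotProduct, hB, hC, h1, h2, h3, h4] <;> ring

end

def Sθ (θ : ℝ) (n : ℤ) : ℝ := Real.sin (n * θ) / Real.sin θ

lemma Sθ_rec (θ p : ℝ) (hp : p = 2 * Real.cos θ) (n : ℤ) :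
    p * Sθ θ n - Sθ θ (n - 1) = Sθ θ (n + 1) := by
  unfold Sθ
  rw [hp, show ((n + 1 : ℤ) : ℝ) * θ = n * θ + θ by push_cast; ring,
    show ((n - 1 : ℤ) : ℝ) * θ = n * θ - θ by push_cast; ring,
    Real.sin_add, Real.sin_sub]
  ring

lemma Sθ_neg_one (θ : ℝ) (hs : Real.sin θ ≠ 0) : Sθ θ (-1) = -1 := by
  unfold Sθ
  rw [show ((-1 : ℤ) : ℝ) * θ = -θ by push_cast; ring, Real.sin_neg]
  field_simp

lemma Sθ_zero (θ : ℝ) : Sθ θ 0 = 0 := by simp [Sθ]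

lemma Sθ_one (θ : ℝ) (hs : Real.sin θ ≠ 0) : Sθ θ 1 = 1 := by
  unfold Sθ; rw [show ((1 : ℤ) : ℝ) * θ = θ by push_cast; ring]; field_simp

lemma main_ind (p θ : ℝ) (hθ : 0 < θ) (hsin : 0 < Real.sin θ)
    (hp : p = 2 * Real.cos θ) (hp0 : 0 ≤ p)
    (m : ℕ) (hm : (m : ℝ) * θ ≤ Real.pi) :
    ∀ i : ℕ, i ≤ m →
      (BCG !![0, -p; p, 0]
          ((List.range i).map fun l => if l % 2 = 0 then (1 : Fin 2) else 0)).1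
        = (if i % 2 = 0 then !![0, -p; p, 0] else !![0, p; -p, 0]) ∧
      (BCG !![0, -p; p, 0]
          ((List.range i).map fun l => if l % 2 = 0 then (1 : Fin 2) else 0)).2.1
        = (if i % 2 = 0
           then !![-(Sθ θ ((i : ℤ) - 1)), Sθ θ i; -(Sθ θ i), Sθ θ ((i : ℤ) + 1)]
           else !![Sθ θ i, -(Sθ θ ((i : ℤ) - 1)); Sθ θ ((i : ℤ) + 1), -(Sθ θ i)]) := by
  have hs := hsin.ne'
  have hnn : ∀ i : ℕ, i ≤ m → 0 ≤ Sθ θ i := by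
    intro i hi
    apply div_nonneg _ hsin.le
    apply Real.sin_nonneg_of_nonneg_of_le_pi
    · positivity
    · push_cast
      calc (i : ℝ) * θ ≤ (m : ℝ) * θ := by
            apply mul_le_mul_of_nonneg_right _ hθ.le
            exact_mod_cast hi
        _ ≤ Real.pi := hm
  intro i
  induction i with
  | zero =>
    intro _
    simp [BCG, Sθ_neg_one θ hs, Sθ_zero, Sθ_one θ hs]
    ext i j; fin_cases i <;> fin_cases j <;> simp [Matrix.one_apply]
  | succ i ih =>
    intro hi1
    have hi : i ≤ m := Nat.le_of_succ_le hi1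
    obtain ⟨hB, hC⟩ := ih hi
    have hb : 0 ≤ Sθ θ i := hnn i hi
    have hc : 0 ≤ Sθ θ ((i : ℤ) + 1) := by
      have := hnn (i + 1) hi1; push_cast at this ⊢; exact_mod_cast this
    have hsplit : ((List.range (i + 1)).map fun l => if l % 2 = 0 then (1 : Fin 2) else 0)
        = ((List.range i).map fun l => if l % 2 = 0 then (1 : Fin 2) else 0)
          ++ [if i % 2 = 0 then (1 : Fin 2) else 0] := by
      rw [List.range_succ, List.map_append]; rfl
    have hfold : ∀ k : Fin 2, BCG !![0, -p; p, 0]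
        (((List.range i).map fun l => if l % 2 = 0 then (1 : Fin 2) else 0) ++ [k])
        = stepBCG !![0, -p; p, 0]
            (BCG !![0, -p; p, 0]
              ((List.range i).map fun l => if l % 2 = 0 then (1 : Fin 2) else 0)) k := by
      intro k; simp [BCG, List.foldl_append]
    have hrec1 := Sθ_rec θ p hp i
    have hrec2 := Sθ_rec θ p hp ((i : ℤ) + 1)
    have c1 : ((i + 1 : ℕ) : ℤ) = (i : ℤ) + 1 := by push_cast; ring
    rw [show ((i : ℤ) + 1 - 1) = (i : ℤ) by ring] at hrec2
    rcases Nat.even_or_odd i with he | ho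
    · have h2 : i % 2 = 0 := Nat.even_iff.mp he
      have h2' : (i + 1) % 2 = 1 := by omega
      rw [h2] at hB hC; simp only [if_pos rfl] at hB hC
      have hsp : ((List.range (i + 1)).map fun l => if l % 2 = 0 then (1 : Fin 2) else 0)
          = ((List.range i).map fun l => if l % 2 = 0 then (1 : Fin 2) else 0)
            ++ [(1 : Fin 2)] := by rw [hsplit, h2]; simp
      rw [hsp, hfold 1, h2']
      obtain ⟨e1, e2⟩ := step_dir1 !![0, -p; p, 0] p (Sθ θ ((i : ℤ) - 1)) (Sθ θ i)
        (Sθ θ ((i : ℤ) + 1)) hp0 hb hc _ hB hC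
      refine ⟨by simpa using e1, ?_⟩
      simp only [Nat.one_ne_zero, if_false]
      rw [e2, hrec1, hrec2, c1, show ((i : ℤ) + 1 - 1) = (i : ℤ) by ring]
    · have h2 : i % 2 = 1 := Nat.odd_iff.mp ho
      have h2' : (i + 1) % 2 = 0 := by omega
      rw [h2] at hB hC; simp only [Nat.one_ne_zero, if_false] at hB hC
      have hsp : ((List.range (i + 1)).map fun l => if l % 2 = 0 then (1 : Fin 2) else 0)
          = ((List.range i).map fun l => if l % 2 = 0 then (1 : Fin 2) else 0)
            ++ [(0 : Fin 2)] := by rw [hsplit, h2]; simp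
      rw [hsp, hfold 0, h2']
      obtain ⟨e1, e2⟩ := step_dir0 !![0, -p; p, 0] p (Sθ θ ((i : ℤ) - 1)) (Sθ θ i)
        (Sθ θ ((i : ℤ) + 1)) hp0 hb hc _ hB hC
      refine ⟨by simpa using e1, ?_⟩
      simp only [if_pos rfl]
      rw [e2, hrec1, hrec2, c1, show ((i : ℤ) + 1 - 1) = (i : ℤ) by ring]; simp

/-- let `B = [[0,-p],[p,0]]` with `0 < p < 2` and `p ≠ 2cos(π/m)` for every
integer `m ≥ 2`. Then the `C`-pattern of `B` is not sign-coherent. More precisely, writing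
`p = 2cos θ` with `π/(m+1) < θ < π/m` for some integer `m ≥ 2`, the `C`-matrix obtained
after `m` mutations alternating in directions `2,1,2,…` (starting at the initial vertex)
has a column with entries of strictly opposite signs. -/
theorem stmt19 (p : ℝ) (hp0 : 0 < p) (hp2 : p < 2)
    (hpm : ∀ m : ℕ, 2 ≤ m → p ≠ 2 * Real.cos (Real.pi / m)) :
    (∃ w : List (Fin 2), ¬ ColSignCoherent (Cpat !![0, -p; p, 0] w)) ∧
    ∃ m : ℕ, 2 ≤ m ∧ ∃ θ : ℝ, p = 2 * Real.cos θ ∧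
      Real.pi / (m + 1) < θ ∧ θ < Real.pi / m ∧
      ∃ j i i' : Fin 2,
        0 < Cpat !![0, -p; p, 0]
            ((List.range m).map fun l => if l % 2 = 0 then (1 : Fin 2) else 0) i j ∧
        Cpat !![0, -p; p, 0]
            ((List.range m).map fun l => if l % 2 = 0 then (1 : Fin 2) else 0) i' j
          < 0 := by
  have hπ : 0 < Real.pi := Real.pi_pos
  set θ := Real.arccos (p / 2) with hθdef
  have hcos : Real.cos θ = p / 2 := Real.cos_arccos (by linarith) (by linarith)
  have hθ0 : 0 < θ := Real.arccos_pos.mpr (by linarith)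
  have hθlt : θ < Real.pi / 2 := Real.arccos_lt_pi_div_two.mpr (by linarith)
  have hsin : 0 < Real.sin θ := Real.sin_pos_of_pos_of_lt_pi hθ0 (by linarith)
  have hpθ : p = 2 * Real.cos θ := by rw [hcos]; ring
  set m := ⌊Real.pi / θ⌋₊ with hmdef
  have hm2 : 2 ≤ m := by
    apply Nat.le_floor
    rw [le_div_iff₀ hθ0]
    push_cast; linarith
  have hm0 : (0 : ℝ) < m := by positivity
  have hfl : (m : ℝ) ≤ Real.pi / θ := Nat.floor_le (by positivity)
  have hfl2 : Real.pi / θ < (m : ℝ) + 1 := Nat.lt_floor_add_one _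
  have hne : (m : ℝ) ≠ Real.pi / θ := by
    intro h
    refine hpm m hm2 ?_
    rw [hpθ]
    rw [eq_div_iff hθ0.ne'] at h
    have hθm : θ = Real.pi / (m : ℝ) := by
      rw [eq_div_iff hm0.ne']
      nlinarith [h]
    rw [hθm]
  have h1 : (m : ℝ) * θ < Real.pi := by
    have := lt_of_le_of_ne hfl hne
    calc (m : ℝ) * θ < (Real.pi / θ) * θ := by
          exact mul_lt_mul_of_pos_right this hθ0
      _ = Real.pi := by field_simp
  have h2 : Real.pi < ((m : ℝ) + 1) * θ := by
    calc Real.pi = (Real.pi / θ) * θ := by field_simp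
      _ < ((m : ℝ) + 1) * θ := mul_lt_mul_of_pos_right hfl2 hθ0
  -- sine signs
  have hsm : 0 < Real.sin ((m : ℝ) * θ) := by
    apply Real.sin_pos_of_pos_of_lt_pi (by positivity) h1
  have hsm1 : Real.sin (((m : ℝ) + 1) * θ) < 0 := by
    have e : Real.sin ((((m : ℝ) + 1) * θ) - Real.pi) = -Real.sin (((m : ℝ) + 1) * θ) :=
      Real.sin_sub_pi _
    have hup : (((m : ℝ) + 1) * θ) - Real.pi < Real.pi := by
      have : (m : ℝ) * θ + θ < 2 * Real.pi := by linarith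
      nlinarith
    have hpos : 0 < Real.sin ((((m : ℝ) + 1) * θ) - Real.pi) :=
      Real.sin_pos_of_pos_of_lt_pi (by linarith) hup
    linarith [e ▸ hpos]
  have Sm_pos : 0 < Sθ θ (m : ℤ) := by
    apply div_pos _ hsin
    push_cast
    exact hsm
  have Sm1_neg : Sθ θ ((m : ℤ) + 1) < 0 := by
    apply div_neg_of_neg_of_pos _ hsin
    push_cast
    exact hsm1
  have hCm := (main_ind p θ hθ0 hsin hpθ hp0.le m h1.le m le_rfl).2
  have key : ∃ j i i' : Fin 2,
      0 < Cpat !![0, -p; p, 0]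
          ((List.range m).map fun l => if l % 2 = 0 then (1 : Fin 2) else 0) i j ∧
      Cpat !![0, -p; p, 0]
          ((List.range m).map fun l => if l % 2 = 0 then (1 : Fin 2) else 0) i' j < 0 := by
    rcases Nat.even_or_odd m with he | ho
    · rw [Nat.even_iff.mp he] at hCm
      simp only [if_pos rfl] at hCm
      refine ⟨1, 0, 1, ?_, ?_⟩ <;> simp [Cpat, hCm]
      · exact Sm_pos
      · exact Sm1_neg
    · rw [Nat.odd_iff.mp ho] at hCm
      simp only [Nat.one_ne_zero, if_false] at hCm
      refine ⟨0, 0, 1, ?_, ?_⟩ <;> simp [Cpat, hCm]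
      · exact Sm_pos
      · exact Sm1_neg
  obtain ⟨j, i, i', hki, hki'⟩ := key
  constructor
  · refine ⟨(List.range m).map fun l => if l % 2 = 0 then (1 : Fin 2) else 0, fun h => ?_⟩
    rcases h j with hpos | hneg
    · exact absurd (hpos i') (not_le.mpr hki')
    · exact absurd (hneg i) (not_le.mpr hki)
  · refine ⟨m, hm2, θ, hpθ, ?_, ?_, j, i, i', hki, hki'⟩
    · rw [div_lt_iff₀ (by positivity)]
      linarith [h2]
    · rw [lt_div_iff₀ hm0]
      linarith [h1]

end
end
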